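/- arXiv:2510.02749 — 7 statements merged into one kernel-verified Lean document; each statement's English description precedes it below -/
import Mathlib

section
/- Let G be a finite connected simple graph and let d and p be nonnegative integers. If the radius of G is strictly greater than d and p ≥ 2d+1, then γ_d^p(G) = ∞. -/
open SimpleGraph

/-- The strong product `G ⊠ H` of two simple graphs. -/
def strongProd {α β : Type*} (G : SimpleGraph α) (H : SimpleGraph β) :
    SimpleGraph (α × β) where
  Adj x y := (G.Adj x.1 y.1 ∧ x.2 = y.2) ∨ (x.1 = y.1 ∧ H.Adj x.2 y.2) ∨
    (G.Adj x.1 y.1 ∧ H.Adj x.2 y.2)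
  symm := by
    constructor
    rintro ⟨a, b⟩ ⟨c, e⟩ (⟨h1, h2⟩ | ⟨h1, h2⟩ | ⟨h1, h2⟩)
    · exact Or.inl ⟨h1.symm, h2.symm⟩
    · exact Or.inr (Or.inl ⟨h1.symm, h2.symm⟩)
    · exact Or.inr (Or.inr ⟨h1.symm, h2.symm⟩)
  loopless := by
    constructor
    rintro ⟨a, b⟩ (⟨h1, _⟩ | ⟨_, h2⟩ | ⟨h1, _⟩)
    · exact G.irrefl h1
    · exact H.irrefl h2
    · exact G.irrefl h1

/-- `S` is a `d`-distance dominating set of `G`: every vertex is within distance `d`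
of some vertex of `S`. -/
def IsDistDomSet {V : Type*} (G : SimpleGraph V) (d : ℕ) (S : Finset V) : Prop :=
  ∀ v : V, ∃ u ∈ S, G.dist u v ≤ d

/-- `S` is a `p`-packing of `G`: distinct vertices of `S` are at distance at least `p + 1`. -/
def IsPacking {V : Type*} (G : SimpleGraph V) (p : ℕ) (S : Finset V) : Prop :=
  ∀ x ∈ S, ∀ y ∈ S, x ≠ y → p + 1 ≤ G.dist x y

/-- The `d`-distance `p`-packing domination number `γ_d^p(G)`, an element of `ℕ∞`,
equal to `⊤` if no `d`-distance dominating `p`-packing exists. -/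
noncomputable def distPackDomNum {V : Type*} (G : SimpleGraph V) (d p : ℕ) : ℕ∞ :=
  sInf {n : ℕ∞ | ∃ S : Finset V, n = S.card ∧ IsDistDomSet G d S ∧ IsPacking G p S}

/-- The radius of a graph: the least `k` such that some vertex is within
distance `k` of all vertices. -/
noncomputable def graphRadius {V : Type*} (G : SimpleGraph V) : ℕ :=
  sInf {k : ℕ | ∃ u : V, ∀ v : V, G.dist u v ≤ k}

lemma dist_getVert_le {V : Type*} (G : SimpleGraph V) (hG : G.Connected)
    {x v : V} (w : G.Walk x v) (k : ℕ) : G.dist x (w.getVert k) ≤ k := by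
  induction w generalizing k with
  | nil => simp [Walk.getVert_of_length_le, G.dist_self]
  | @cons a b c hab q ih =>
    cases k with
    | zero => simp [Walk.getVert_zero]
    | succ n =>
      have h1 : G.dist a b ≤ 1 := by
        have := G.dist_le (Walk.cons hab Walk.nil)
        simpa using this
      calc G.dist a ((Walk.cons hab q).getVert (n+1))
          ≤ G.dist a b + G.dist b (q.getVert n) := hG.dist_triangle
        _ ≤ 1 + n := add_le_add h1 (ih n)
        _ = n + 1 := by omega

lemma exists_dist_eq' {V : Type*} (G : SimpleGraph V) (hG : G.Connected)
    {x v : V} {k : ℕ} (hk : k ≤ G.dist x v) : ∃ m : V, G.dist x m = k := by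
  obtain ⟨w, hw⟩ := hG.exists_walk_length_eq_dist x v
  refine ⟨w.getVert k, ?_⟩
  have h1 : G.dist x (w.getVert k) ≤ k := dist_getVert_le G hG w k
  have h2 : G.dist (w.getVert k) v ≤ w.length - k := by
    have := dist_getVert_le G hG w.reverse (w.length - k)
    rw [Walk.getVert_reverse] at this
    have hk' : w.length - (w.length - k) = k := by omega
    rw [hk'] at this
    rwa [dist_comm]
  have h3 := hG.dist_triangle (u := x) (v := w.getVert k) (w := v)
  omega

theorem gamma_eq_top_of_radius_gt {V : Type*} [Fintype V] (G : SimpleGraph V)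
    (hG : G.Connected) (d p : ℕ) (h : d < graphRadius G) (hp : 2 * d + 1 ≤ p) :
    distPackDomNum G d p = ⊤ := by
  have hempty : {n : ℕ∞ | ∃ S : Finset V, n = S.card ∧ IsDistDomSet G d S ∧ IsPacking G p S} = ∅ := by
    rw [Set.eq_empty_iff_forall_notMem]
    rintro n ⟨S, hn, hdom, hpack⟩
    have hne : Nonempty V := hG.nonempty
    obtain ⟨v0⟩ := hne
    obtain ⟨x, hxS, _⟩ := hdom v0
    -- every vertex has eccentricity > d
    have hx : ∃ v : V, d < G.dist x v := by
      by_contra hcon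
      push_neg at hcon
      have : graphRadius G ≤ d := Nat.sInf_le ⟨x, hcon⟩
      omega
    obtain ⟨v, hv⟩ := hx
    obtain ⟨m, hm⟩ := exists_dist_eq' G hG (x := x) (v := v) (k := d + 1) (by omega)
    obtain ⟨z, hzS, hzm⟩ := hdom m
    have hxz : G.dist x z ≤ 2 * d + 1 := by
      have h3 := hG.dist_triangle (u := x) (v := m) (w := z)
      have : G.dist m z = G.dist z m := dist_comm
      omega
    have : z = x := by
      by_contra hne
      have := hpack x hxS z hzS (fun e => hne e.symm)
      omega
    subst this
    omega
  rw [distPackDomNum, hempty, sInf_empty]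
end

section
/- Let G be a nonempty finite connected simple graph and let d and p be nonnegative integers. If p ≤ d, then γ_d^p(G) < ∞, i.e., G admits a set that is simultaneously a d-distance dominating set and a p-packing. -/
open SimpleGraph

theorem gamma_lt_top_of_p_le_d {V : Type*} [Fintype V] [Nonempty V] (G : SimpleGraph V)
    (hG : G.Connected) (d p : ℕ) (hp : p ≤ d) :
    distPackDomNum G d p < ⊤ := by
  classical
  -- choose a p-packing of maximal cardinality
  obtain ⟨S, hS, hmax⟩ := Finset.exists_max_image
    (Finset.univ.filter (fun S : Finset V => IsPacking G p S)) Finset.card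
    ⟨{Classical.arbitrary V}, by
      simp only [Finset.mem_filter, Finset.mem_univ, true_and]
      intro x hx y hy hxy
      simp only [Finset.mem_singleton] at hx hy
      exact absurd (hx.trans hy.symm) hxy⟩
  simp only [Finset.mem_filter, Finset.mem_univ, true_and] at hS
  have hdom : IsDistDomSet G d S := by
    intro v
    by_cases hv : v ∈ S
    · exact ⟨v, hv, by rw [G.dist_self]; exact Nat.zero_le d⟩
    by_contra h
    push_neg at h
    have hfar : ∀ u ∈ S, p + 1 ≤ G.dist u v := by
      intro u hu
      have := h u hu
      omega
    have hins : IsPacking G p (insert v S) := by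
      intro x hx y hy hxy
      rcases Finset.mem_insert.1 hx with hx' | hx' <;>
        rcases Finset.mem_insert.1 hy with hy' | hy'
      · exact absurd (hx'.trans hy'.symm) hxy
      · subst hx'; rw [G.dist_comm]; exact hfar y hy'
      · subst hy'; exact hfar x hx'
      · exact hS x hx' y hy' hxy
    have hcard : (insert v S).card = S.card + 1 := Finset.card_insert_of_notMem hv
    have := hmax (insert v S) (by simp [hins])
    omega
  have hmem : (S.card : ℕ∞) ∈
      {n : ℕ∞ | ∃ T : Finset V, n = T.card ∧ IsDistDomSet G d T ∧ IsPacking G p T} :=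
    ⟨S, rfl, hdom, hS⟩
  calc distPackDomNum G d p ≤ (S.card : ℕ∞) := sInf_le hmem
    _ < ⊤ := by exact_mod_cast WithTop.coe_lt_top _
end

section
/- For all finite connected simple graphs G and H and all nonnegative integers d and p, γ_d^p(G ⊠ H) ≤ γ_d^p(G) · γ_d^p(H), where the inequality is interpreted in ℕ ∪ {∞}. -/
open SimpleGraph

section aux

variable {α β : Type*} {G : SimpleGraph α} {H : SimpleGraph β}

/-- Embedding of `G` at level `h` into the strong product. -/
def strongHomL (G : SimpleGraph α) (H : SimpleGraph β) (h : β) : G →g strongProd G H :=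
  ⟨fun a => (a, h), fun hadj => Or.inl ⟨hadj, rfl⟩⟩

/-- Embedding of `H` at level `g` into the strong product. -/
def strongHomR (G : SimpleGraph α) (H : SimpleGraph β) (g : α) : H →g strongProd G H :=
  ⟨fun b => (g, b), fun hadj => Or.inr (Or.inl ⟨rfl, hadj⟩)⟩

lemma exists_walk_strongProd {g g' : α} {h h' : β}
    (wg : G.Walk g g') (wh : H.Walk h h') :
    ∃ w : (strongProd G H).Walk (g, h) (g', h'), w.length ≤ max wg.length wh.length := by
  induction wg generalizing h with
  | nil =>
    refine ⟨wh.map (strongHomR G H _), ?_⟩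
    exact le_trans (le_of_eq (SimpleGraph.Walk.length_map _ wh)) (le_max_right _ _)
  | @cons u v w' hadj rest ih =>
    cases wh with
    | nil =>
      refine ⟨(SimpleGraph.Walk.cons hadj rest).map (strongHomL G H _), ?_⟩
      exact le_trans (le_of_eq (congrArg (· + 1) (SimpleGraph.Walk.length_map (strongHomL G H _) rest))) (le_max_left _ _)
    | @cons hb hc hd hadj' rest' =>
      obtain ⟨w, hw⟩ := ih rest'
      refine ⟨SimpleGraph.Walk.cons (Or.inr (Or.inr ⟨hadj, hadj'⟩)) w, ?_⟩
      show w.length + 1 ≤ max (rest.length + 1) (rest'.length + 1)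
      omega

lemma dist_proj_le (hG : G.Connected) (hH : H.Connected) {x y : α × β}
    (w : (strongProd G H).Walk x y) :
    G.dist x.1 y.1 ≤ w.length ∧ H.dist x.2 y.2 ≤ w.length := by
  induction w with
  | nil => simp
  | @cons u v z hadj rest ih =>
    have h1 : G.dist u.1 v.1 ≤ 1 := by
      rcases hadj with ⟨ha, _⟩ | ⟨ha, _⟩ | ⟨ha, _⟩
      · exact le_trans (SimpleGraph.dist_le ha.toWalk) (by simp)
      · simp [ha, SimpleGraph.dist_self]
      · exact le_trans (SimpleGraph.dist_le ha.toWalk) (by simp)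
    have h2 : H.dist u.2 v.2 ≤ 1 := by
      rcases hadj with ⟨_, ha⟩ | ⟨_, ha⟩ | ⟨_, ha⟩
      · simp [ha, SimpleGraph.dist_self]
      · exact le_trans (SimpleGraph.dist_le ha.toWalk) (by simp)
      · exact le_trans (SimpleGraph.dist_le ha.toWalk) (by simp)
    constructor
    · calc G.dist u.1 z.1 ≤ G.dist u.1 v.1 + G.dist v.1 z.1 := hG.dist_triangle
        _ ≤ 1 + rest.length := add_le_add h1 ih.1
        _ = rest.length + 1 := by omega
    · calc H.dist u.2 z.2 ≤ H.dist u.2 v.2 + H.dist v.2 z.2 := hH.dist_triangle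
        _ ≤ 1 + rest.length := add_le_add h2 ih.2
        _ = rest.length + 1 := by omega

lemma strongProd_dist_le (hG : G.Connected) (hH : H.Connected)
    (g g' : α) (h h' : β) :
    (strongProd G H).dist (g, h) (g', h') ≤ max (G.dist g g') (H.dist h h') := by
  obtain ⟨wg, hwg⟩ := (hG.preconnected g g').exists_walk_length_eq_dist
  obtain ⟨wh, hwh⟩ := (hH.preconnected h h').exists_walk_length_eq_dist
  obtain ⟨w, hw⟩ := exists_walk_strongProd (G := G) (H := H) wg wh
  calc (strongProd G H).dist (g, h) (g', h') ≤ w.length := SimpleGraph.dist_le w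
    _ ≤ max wg.length wh.length := hw
    _ = max (G.dist g g') (H.dist h h') := by rw [hwg, hwh]

lemma le_strongProd_dist (hG : G.Connected) (hH : H.Connected)
    (g g' : α) (h h' : β) :
    G.dist g g' ≤ (strongProd G H).dist (g, h) (g', h') ∧
      H.dist h h' ≤ (strongProd G H).dist (g, h) (g', h') := by
  obtain ⟨wg, -⟩ := (hG.preconnected g g').exists_walk_length_eq_dist
  obtain ⟨wh, -⟩ := (hH.preconnected h h').exists_walk_length_eq_dist
  obtain ⟨w0, -⟩ := exists_walk_strongProd (G := G) (H := H) wg wh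
  have hr : (strongProd G H).Reachable (g, h) (g', h') := ⟨w0⟩
  obtain ⟨w, hwl⟩ := hr.exists_walk_length_eq_dist
  have := dist_proj_le hG hH w
  exact ⟨by rw [← hwl]; exact this.1, by rw [← hwl]; exact this.2⟩

end aux

theorem gamma_strongProd_le {α β : Type*} [Fintype α] [Fintype β]
    (G : SimpleGraph α) (H : SimpleGraph β) (hG : G.Connected) (hH : H.Connected)
    (d p : ℕ) :
    distPackDomNum (strongProd G H) d p ≤ distPackDomNum G d p * distPackDomNum H d p := by
  unfold distPackDomNum
  set A : Set ℕ∞ :=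
    {n : ℕ∞ | ∃ S : Finset α, n = S.card ∧ IsDistDomSet G d S ∧ IsPacking G p S} with hA
  set B : Set ℕ∞ :=
    {n : ℕ∞ | ∃ S : Finset β, n = S.card ∧ IsDistDomSet H d S ∧ IsPacking H p S} with hB
  -- every member of A and B is positive
  have hApos : ∀ n ∈ A, 1 ≤ n := by
    rintro n ⟨S, rfl, hdom, -⟩
    obtain ⟨a⟩ := hG.nonempty
    obtain ⟨u, hu, -⟩ := hdom a
    have : 0 < S.card := Finset.card_pos.mpr ⟨u, hu⟩
    exact_mod_cast this
  have hBpos : ∀ n ∈ B, 1 ≤ n := by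
    rintro n ⟨S, rfl, hdom, -⟩
    obtain ⟨b⟩ := hH.nonempty
    obtain ⟨u, hu, -⟩ := hdom b
    have : 0 < S.card := Finset.card_pos.mpr ⟨u, hu⟩
    exact_mod_cast this
  by_cases hAne : A.Nonempty
  · by_cases hBne : B.Nonempty
    · -- both infima attained
      have hAmem : sInf A ∈ A := csInf_mem hAne
      have hBmem : sInf B ∈ B := csInf_mem hBne
      obtain ⟨SG, hSGcard, hSGdom, hSGpack⟩ := hAmem
      obtain ⟨SH, hSHcard, hSHdom, hSHpack⟩ := hBmem
      have hmem : ((SG ×ˢ SH).card : ℕ∞) ∈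
          {n : ℕ∞ | ∃ S : Finset (α × β), n = S.card ∧
            IsDistDomSet (strongProd G H) d S ∧ IsPacking (strongProd G H) p S} := by
        refine ⟨SG ×ˢ SH, rfl, ?_, ?_⟩
        · rintro ⟨a, b⟩
          obtain ⟨u, hu, hud⟩ := hSGdom a
          obtain ⟨v, hv, hvd⟩ := hSHdom b
          refine ⟨(u, v), Finset.mk_mem_product hu hv, ?_⟩
          calc (strongProd G H).dist (u, v) (a, b) ≤ max (G.dist u a) (H.dist v b) :=
              strongProd_dist_le hG hH u a v b
            _ ≤ d := max_le hud hvd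
        · rintro ⟨u, v⟩ huv ⟨u', v'⟩ huv' hne
          rw [Finset.mem_product] at huv huv'
          rcases eq_or_ne u u' with hu | hu
          · have hv : v ≠ v' := by rintro rfl; exact hne (by rw [hu])
            calc p + 1 ≤ H.dist v v' := hSHpack v huv.2 v' huv'.2 hv
              _ ≤ (strongProd G H).dist (u, v) (u', v') :=
                (le_strongProd_dist hG hH u u' v v').2
          · calc p + 1 ≤ G.dist u u' := hSGpack u huv.1 u' huv'.1 hu
              _ ≤ (strongProd G H).dist (u, v) (u', v') :=
                (le_strongProd_dist hG hH u u' v v').1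
      have hle := sInf_le hmem
      refine le_trans hle ?_
      rw [hSGcard, hSHcard, Finset.card_product]
      push_cast
      rfl
    · rw [Set.not_nonempty_iff_eq_empty] at hBne
      show _ ≤ sInf A * sInf B
      rw [hBne, sInf_empty]
      have h1 : (1 : ℕ∞) ≤ sInf A := le_csInf hAne hApos
      have : sInf A ≠ 0 := by intro h0; rw [h0] at h1; exact absurd h1 (by simp)
      rw [ENat.mul_top this]
      exact le_top
  · rw [Set.not_nonempty_iff_eq_empty] at hAne
    show _ ≤ sInf A * sInf B
    rw [hAne, sInf_empty]
    rcases Set.eq_empty_or_nonempty B with hBe | hBne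
    · rw [hBe, sInf_empty]; simp
    · have h1 : (1 : ℕ∞) ≤ sInf B := le_csInf hBne hBpos
      have : sInf B ≠ 0 := by intro h0; rw [h0] at h1; exact absurd h1 (by simp)
      rw [ENat.top_mul this]
      exact le_top
end

section
/- For all nonnegative integers d and p and all integers m ≥ 3 and n ≥ 3: if γ_d^p(C_m) = ∞, then γ_d^p(C_m ⊠ C_n) = ∞. -/
open SimpleGraph

open scoped Fin.NatCast Fin.CommRing

namespace GammaAux

open Finset


lemma dist_le_one_of_adj {V : Type*} {G : SimpleGraph V} {u v : V} (h : G.Adj u v) :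
    G.dist u v ≤ 1 :=
  le_trans (SimpleGraph.dist_le (Walk.cons h Walk.nil)) (by simp)

section Cycle

variable {m : ℕ} [NeZero m]

lemma cycle_connected : (cycleGraph m).Connected := by
  obtain ⟨k, rfl⟩ : ∃ k, m = k + 1 := ⟨m - 1, by have := NeZero.ne m; omega⟩
  exact cycleGraph_connected

lemma cycle_adj_succ (hm : 2 ≤ m) (u : Fin m) : (cycleGraph m).Adj u (u + 1) := by
  obtain ⟨k, rfl⟩ : ∃ k, m = k + 2 := ⟨m - 2, by omega⟩
  rw [cycleGraph_adj]
  right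
  exact add_sub_cancel_left u 1

lemma cycle_adj_cases (hm : 2 ≤ m) {u v : Fin m} (h : (cycleGraph m).Adj u v) :
    v = u + 1 ∨ u = v + 1 := by
  obtain ⟨k, rfl⟩ : ∃ k, m = k + 2 := ⟨m - 2, by omega⟩
  rw [cycleGraph_adj] at h
  rcases h with h | h
  · right; rw [sub_eq_iff_eq_add] at h; exact h.trans (add_comm 1 v)
  · left; rw [sub_eq_iff_eq_add] at h; exact h.trans (add_comm 1 u)

lemma cycle_dist_add (hm : 2 ≤ m) (u : Fin m) (s : ℕ) :
    (cycleGraph m).dist u (u + (s : Fin m)) ≤ s := by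
  induction s with
  | zero => simp
  | succ s ih =>
    have h2 : (((s + 1 : ℕ)) : Fin m) = (s : Fin m) + 1 := by push_cast; ring
    calc (cycleGraph m).dist u (u + ((s+1 : ℕ) : Fin m))
        ≤ (cycleGraph m).dist u (u + (s : Fin m)) +
          (cycleGraph m).dist (u + (s : Fin m)) (u + ((s+1:ℕ) : Fin m)) :=
          cycle_connected.dist_triangle
      _ ≤ s + 1 := by
          refine add_le_add ih ?_
          rw [h2, ← add_assoc]
          exact dist_le_one_of_adj (cycle_adj_succ hm _)

lemma cycle_dist_rep_le (hm : 2 ≤ m) {u v : Fin m} {s t : ℕ} (hst : s ≤ t)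
    (h : v = u + (s : Fin m) ∨ u = v + (s : Fin m)) :
    (cycleGraph m).dist u v ≤ t := by
  rcases h with h | h
  · rw [h]; exact le_trans (cycle_dist_add hm u s) hst
  · rw [SimpleGraph.dist_comm, h]; exact le_trans (cycle_dist_add hm v s) hst

lemma cycle_rep_of_walk (hm : 2 ≤ m) {u v : Fin m} (w : (cycleGraph m).Walk u v) :
    ∃ s : ℕ, s ≤ w.length ∧ (v = u + (s : Fin m) ∨ u = v + (s : Fin m)) := by
  induction w with
  | nil => exact ⟨0, by simp⟩
  | @cons u u₁ v hadj w ih =>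
    obtain ⟨s, hs, hrep⟩ := ih
    have hcast : ∀ s₀ : ℕ, (((s₀ + 1 : ℕ)) : Fin m) = (s₀ : Fin m) + 1 := by
      intro s₀; push_cast; ring
    rcases cycle_adj_cases hm hadj with h1 | h1
    · -- u₁ = u + 1
      rcases hrep with h2 | h2
      · refine ⟨s + 1, by simpa using Nat.add_le_add_right hs 1, Or.inl ?_⟩
        rw [hcast, h2, h1]; ring
      · -- u₁ = v + s
        rcases Nat.eq_zero_or_pos s with rfl | hpos
        · refine ⟨1, by simp [Walk.length_cons], Or.inl ?_⟩
          simp only [Nat.cast_zero, add_zero] at h2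
          rw [← h2, h1]; norm_num
        · obtain ⟨s₀, rfl⟩ : ∃ s₀, s = s₀ + 1 := ⟨s - 1, by omega⟩
          refine ⟨s₀, by simp only [Walk.length_cons]; omega, Or.inr ?_⟩
          have : u + 1 = v + (s₀ : Fin m) + 1 := by
            rw [← h1, h2, hcast]; ring
          exact add_right_cancel this
    · -- u = u₁ + 1
      rcases hrep with h2 | h2
      · rcases Nat.eq_zero_or_pos s with rfl | hpos
        · refine ⟨1, by simp [Walk.length_cons], Or.inr ?_⟩
          simp only [Nat.cast_zero, add_zero] at h2
          rw [h2, h1]; norm_num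
        · obtain ⟨s₀, rfl⟩ : ∃ s₀, s = s₀ + 1 := ⟨s - 1, by omega⟩
          refine ⟨s₀, by simp only [Walk.length_cons]; omega, Or.inl ?_⟩
          rw [h2, h1, hcast]; ring
      · refine ⟨s + 1, by simpa using Nat.add_le_add_right hs 1, Or.inr ?_⟩
        rw [hcast, h1, h2]; ring

lemma cycle_dist_rep (hm : 2 ≤ m) {u v : Fin m} {t : ℕ}
    (h : (cycleGraph m).dist u v ≤ t) :
    ∃ s : ℕ, s ≤ t ∧ (v = u + (s : Fin m) ∨ u = v + (s : Fin m)) := by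
  obtain ⟨w, hw⟩ := (cycle_connected (m := m) u v).exists_walk_length_eq_dist
  obtain ⟨s, hs, hrep⟩ := cycle_rep_of_walk hm w
  exact ⟨s, by omega, hrep⟩

lemma cycle_dist_half (hm : 2 ≤ m) {c : ℕ} (hc : m ≤ 2*c + 1) (u v : Fin m) :
    (cycleGraph m).dist u v ≤ c := by
  set a : ℕ := (v - u).val with ha
  have hav : ((a : ℕ) : Fin m) = v - u := Fin.cast_val_eq_self (v - u)
  have halt : a < m := (v - u).isLt
  rcases le_or_gt a c with h | h
  · refine cycle_dist_rep_le hm h (Or.inl ?_)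
    rw [hav]; ring
  · refine cycle_dist_rep_le hm (show m - a ≤ c by omega) (Or.inr ?_)
    have : ((m - a : ℕ) : Fin m) = u - v := by
      rw [Nat.cast_sub halt.le, hav, Fin.natCast_self]; ring
    rw [this]; ring

end Cycle

section Itv

variable {m : ℕ} [NeZero m]

/-- The cyclic interval `{a, a+1, ..., a+w-1}` in `Fin m`. -/
def itv (a : Fin m) (w : ℕ) : Finset (Fin m) :=
  (range w).image (fun t : ℕ => a + (t : Fin m))

lemma mem_itv {a x : Fin m} {w : ℕ} : x ∈ itv a w ↔ ∃ t, t < w ∧ x = a + (t : Fin m) := by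
  simp [itv, eq_comm]

lemma itv_card_le {a : Fin m} {w : ℕ} : (itv a w).card ≤ w :=
  le_trans card_image_le (by simp)

lemma itv_card {a : Fin m} {w : ℕ} (hw : w ≤ m) : (itv a w).card = w := by
  rw [itv, card_image_of_injOn, card_range]
  intro t ht t' ht' h
  simp only [coe_range, Set.mem_Iio] at ht ht'
  have h2 : ((t : ℕ) : Fin m) = ((t' : ℕ) : Fin m) := add_left_cancel h
  have e1 : ((t : ℕ) : Fin m).val = t := Fin.val_cast_of_lt (by omega)
  have e2 : ((t' : ℕ) : Fin m).val = t' := Fin.val_cast_of_lt (by omega)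
  rw [← e1, h2, e2]

lemma itv_dist_le (hm : 2 ≤ m) {a x y : Fin m} {w : ℕ}
    (hx : x ∈ itv a w) (hy : y ∈ itv a w) : (cycleGraph m).dist x y ≤ w - 1 := by
  obtain ⟨t, ht, rfl⟩ := mem_itv.mp hx
  obtain ⟨t', ht', rfl⟩ := mem_itv.mp hy
  rcases le_total t t' with h | h
  · refine cycle_dist_rep_le hm (show t' - t ≤ w - 1 by omega) (Or.inl ?_)
    rw [Nat.cast_sub h]; ring
  · refine cycle_dist_rep_le hm (show t - t' ≤ w - 1 by omega) (Or.inr ?_)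
    rw [Nat.cast_sub h]; ring

lemma mem_itv_of_dist_le (hm : 2 ≤ m) {c v : Fin m} {d : ℕ}
    (h : (cycleGraph m).dist c v ≤ d) : v ∈ itv (c - (d : Fin m)) (2*d + 1) := by
  obtain ⟨s, hs, hrep⟩ := cycle_dist_rep hm h
  rcases hrep with h2 | h2
  · refine mem_itv.mpr ⟨d + s, by omega, ?_⟩
    rw [h2, Nat.cast_add]; ring
  · refine mem_itv.mpr ⟨d - s, by omega, ?_⟩
    rw [h2, Nat.cast_sub hs]; ring

/-- counting: a fixed `x` lies in exactly `w` of the `m` cyclic intervals of width `w`. -/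
lemma filter_mem_itv_card (x : Fin m) {w : ℕ} (hw : w ≤ m) :
    (univ.filter (fun j : Fin m => x ∈ itv j w)).card = w := by
  have key : (univ.filter (fun j : Fin m => x ∈ itv j w))
      = itv (x - ((w - 1 : ℕ) : Fin m)) w := by
    ext j
    simp only [mem_filter, mem_univ, true_and, mem_itv]
    constructor
    · rintro ⟨t, ht, he⟩
      refine ⟨w - 1 - t, by omega, ?_⟩
      rw [Nat.cast_sub (by omega : t ≤ w - 1)]
      have : j = x - (t : Fin m) := by rw [he]; ring
      rw [this]; ring
    · rintro ⟨t, ht, he⟩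
      refine ⟨w - 1 - t, by omega, ?_⟩
      rw [he, Nat.cast_sub (by omega : t ≤ w - 1)]
      ring
  rw [key, itv_card hw]

lemma packing_card_mul_le (hm : 2 ≤ m) {A : Finset (Fin m)} {p : ℕ} (h2 : 2 ≤ A.card)
    (hA : ∀ x ∈ A, ∀ y ∈ A, x ≠ y → p + 1 ≤ (cycleGraph m).dist x y) :
    A.card * (p + 1) ≤ m := by
  have hpm : p + 1 ≤ m := by
    obtain ⟨x, hx, y, hy, hxy⟩ := Finset.one_lt_card.mp h2
    have h1 := hA x hx y hy hxy
    have h3 : (cycleGraph m).dist x y ≤ m / 2 :=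
      cycle_dist_half hm (show m ≤ 2*(m/2)+1 by omega) x y
    omega
  have hdisj : ∀ x ∈ A, ∀ y ∈ A, x ≠ y → Disjoint (itv x (p+1)) (itv y (p+1)) := by
    intro x hx y hy hxy
    rw [Finset.disjoint_left]
    rintro z hzx hzy
    obtain ⟨t, ht, rfl⟩ := mem_itv.mp hzx
    obtain ⟨t', ht', he⟩ := mem_itv.mp hzy
    have hd : (cycleGraph m).dist x y ≤ p := by
      rcases le_total t' t with hle | hle
      · refine cycle_dist_rep_le hm (show t - t' ≤ p by omega) (Or.inl ?_)
        have : y + (t' : Fin m) = x + ((t - t' : ℕ) : Fin m) + (t' : Fin m) := by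
          rw [← he, Nat.cast_sub hle]; ring
        have := add_right_cancel this
        rw [this]
      · refine cycle_dist_rep_le hm (show t' - t ≤ p by omega) (Or.inr ?_)
        have : x + (t : Fin m) = y + ((t' - t : ℕ) : Fin m) + (t : Fin m) := by
          rw [he, Nat.cast_sub hle]; ring
        have := add_right_cancel this
        rw [this]
    have := hA x hx y hy hxy
    omega
  calc A.card * (p + 1) = ∑ x ∈ A, (itv x (p+1)).card := by
        rw [Finset.sum_congr rfl (fun x _ => itv_card hpm), Finset.sum_const, smul_eq_mul]
    _ = (A.biUnion (fun x => itv x (p+1))).card := (Finset.card_biUnion hdisj).symm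
    _ ≤ (univ : Finset (Fin m)).card := card_le_card (subset_univ _)
    _ = m := by simp

lemma dom_card_mul_ge (hm : 2 ≤ m) {T : Finset (Fin m)} {d : ℕ}
    (hT : ∀ v : Fin m, ∃ c ∈ T, (cycleGraph m).dist c v ≤ d) :
    m ≤ T.card * (2 * d + 1) := by
  have hsub : (univ : Finset (Fin m)) ⊆ T.biUnion (fun c => itv (c - (d : Fin m)) (2*d+1)) := by
    intro v _
    obtain ⟨c, hc, hdist⟩ := hT v
    exact Finset.mem_biUnion.mpr ⟨c, hc, mem_itv_of_dist_le hm hdist⟩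
  calc m = (univ : Finset (Fin m)).card := by simp
    _ ≤ (T.biUnion (fun c => itv (c - (d : Fin m)) (2*d+1))).card := card_le_card hsub
    _ ≤ ∑ c ∈ T, (itv (c - (d : Fin m)) (2*d+1)).card := Finset.card_biUnion_le
    _ ≤ ∑ c ∈ T, (2*d+1) := Finset.sum_le_sum (fun c _ => itv_card_le)
    _ = T.card * (2*d+1) := by rw [Finset.sum_const, smul_eq_mul]

end Itv


lemma nat_add_div_le {K a b : ℕ} (hK : 0 < K) : a / K + b / K ≤ (a + b) / K := by
  rw [Nat.le_div_iff_mul_le hK, Nat.add_mul]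
  exact add_le_add (Nat.div_mul_le_self a K) (Nat.div_mul_le_self b K)

lemma cycle_feasible {m : ℕ} [NeZero m] (hm2 : 2 ≤ m) {d p K : ℕ} (hK : 1 ≤ K)
    (h1 : (p + 1) * K ≤ m) (h2 : m ≤ (2 * d + 1) * K) :
    ∃ A : Finset (Fin m), (∀ v : Fin m, ∃ c ∈ A, (cycleGraph m).dist c v ≤ d) ∧
      (∀ x ∈ A, ∀ y ∈ A, x ≠ y → p + 1 ≤ (cycleGraph m).dist x y) := by
  have hK' : 0 < K := hK
  have glb : ∀ s t : ℕ, s ≤ t → t ≤ K → s * m / K + (t - s) * (p + 1) ≤ t * m / K := by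
    intro s t hst htK
    have a2 : ((t - s) * (p + 1)) * K ≤ (t - s) * m :=
      calc ((t - s) * (p + 1)) * K = (t - s) * ((p + 1) * K) := by ring
        _ ≤ (t - s) * m := Nat.mul_le_mul (le_refl _) h1
    have a3 : (t - s) * (p + 1) ≤ (t - s) * m / K := (Nat.le_div_iff_mul_le hK').mpr a2
    have a4 : s * m / K + (t - s) * m / K ≤ (s * m + (t - s) * m) / K := nat_add_div_le hK'
    have a5 : s * m + (t - s) * m = t * m := by
      rw [← Nat.add_mul]; congr 1; omega
    rw [a5] at a4
    omega
  have gub : ∀ t : ℕ, (t + 1) * m / K ≤ t * m / K + (2 * d + 1) := by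
    intro t
    have e := Nat.div_add_mod (t * m) K
    have e2 : t * m % K < K := Nat.mod_lt _ hK'
    have hlt : (t + 1) * m < (t * m / K + (2 * d + 2)) * K := by
      have expand : (t * m / K + (2 * d + 2)) * K = K * (t * m / K) + K + (2*d+1) * K := by ring
      have expand2 : (t + 1) * m = t * m + m := by ring
      omega
    have := (Nat.div_lt_iff_lt_mul hK').mpr hlt
    omega
  have hqK : K * m / K = m := Nat.mul_div_cancel_left _ hK'
  refine ⟨(range K).image (fun t : ℕ => ((t * m / K : ℕ) : Fin m)), ?_, ?_⟩
  · intro v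
    set av := v.val with hav
    have hv : ((av : ℕ) : Fin m) = v := by rw [hav]; exact Fin.cast_val_eq_self v
    have hvm : av < m := v.isLt
    have h0mem : (0:ℕ) ∈ (range K).filter (fun t => t * m / K ≤ av) := by
      simp only [Finset.mem_filter, Finset.mem_range]
      exact ⟨by omega, by rw [Nat.zero_mul, Nat.zero_div]; exact Nat.zero_le _⟩
    set F := (range K).filter (fun t => t * m / K ≤ av) with hF
    have hFne : F.Nonempty := ⟨0, h0mem⟩
    set t₀ := F.max' hFne with ht₀
    have ht₀F : t₀ ∈ F := F.max'_mem hFne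
    have ht₀K : t₀ < K := Finset.mem_range.mp (Finset.mem_filter.mp ht₀F).1
    have ht₀le : t₀ * m / K ≤ av := (Finset.mem_filter.mp ht₀F).2
    have hnext : av < (t₀ + 1) * m / K := by
      rcases eq_or_lt_of_le (show t₀ + 1 ≤ K by omega) with heq | hlt2
      · rw [heq, hqK]; exact hvm
      · by_contra hcon
        push_neg at hcon
        have hmem : t₀ + 1 ∈ F := Finset.mem_filter.mpr ⟨Finset.mem_range.mpr hlt2, hcon⟩
        have := F.le_max' _ hmem
        omega
    have hgap := gub t₀
    rcases le_or_gt (av - t₀ * m / K) d with hα | hα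
    · refine ⟨((t₀ * m / K : ℕ) : Fin m),
        Finset.mem_image.mpr ⟨t₀, Finset.mem_range.mpr ht₀K, rfl⟩, ?_⟩
      refine cycle_dist_rep_le hm2 hα (Or.inl ?_)
      rw [← hv, ← Nat.cast_add]
      congr 1
      omega
    · have hβ : (t₀ + 1) * m / K - av ≤ d := by omega
      refine ⟨(((t₀ + 1) * m / K : ℕ) : Fin m), ?_, ?_⟩
      · rcases eq_or_lt_of_le (show t₀ + 1 ≤ K by omega) with heq | hlt2
        · refine Finset.mem_image.mpr ⟨0, Finset.mem_range.mpr (by omega), ?_⟩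
          rw [heq, hqK]
          simp
        · exact Finset.mem_image.mpr ⟨t₀ + 1, Finset.mem_range.mpr hlt2, rfl⟩
      · refine cycle_dist_rep_le hm2 hβ (Or.inr ?_)
        rw [← hv, ← Nat.cast_add]
        congr 1
        omega
  · have key : ∀ s t : ℕ, s < t → t < K →
        p + 1 ≤ (cycleGraph m).dist ((s * m / K : ℕ) : Fin m) ((t * m / K : ℕ) : Fin m) := by
      intro s t hst htK
      have hab := glb s t (by omega) (by omega)
      have hmul1 : 1 * (p+1) ≤ (t - s) * (p+1) := Nat.mul_le_mul (by omega) (le_refl _)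
      have hbm := glb t K (by omega) (le_refl K)
      rw [hqK] at hbm
      have hmul2 : 1 * (p+1) ≤ (K - t) * (p+1) := Nat.mul_le_mul (by omega) (le_refl _)
      by_contra hcon
      push_neg at hcon
      obtain ⟨σ, hσ, hrep⟩ := cycle_dist_rep hm2
        (show (cycleGraph m).dist ((s * m / K : ℕ) : Fin m) ((t * m / K : ℕ) : Fin m) ≤ p
          by omega)
      rcases hrep with hr | hr
      · rw [← Nat.cast_add] at hr
        have hmod := (CharP.natCast_eq_natCast (Fin m) m).mp hr
        have heq := hmod.eq_of_lt_of_lt (by omega) (by omega)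
        omega
      · rw [← Nat.cast_add] at hr
        have hmod := (CharP.natCast_eq_natCast (Fin m) m).mp hr
        have heq := hmod.eq_of_lt_of_lt (by omega) (by omega)
        omega
    intro x hx y hy hxy
    obtain ⟨s, hs, hsx⟩ := Finset.mem_image.mp hx
    obtain ⟨t, ht, hty⟩ := Finset.mem_image.mp hy
    rw [Finset.mem_range] at hs ht
    subst hsx hty
    rcases lt_trichotomy s t with hlt | heq | hgt
    · exact key s t hlt ht
    · exact absurd (by rw [heq]) hxy
    · rw [SimpleGraph.dist_comm]
      exact key t s hgt hs

lemma sum_card_filter_itv {n : ℕ} [NeZero n] {γ : Type*} (S : Finset γ) (f : γ → Fin n)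
    {w : ℕ} (hw : w ≤ n) :
    ∑ j : Fin n, (S.filter (fun s => f s ∈ itv j w)).card = w * S.card := by
  have h1 : ∀ j : Fin n, (S.filter (fun s => f s ∈ itv j w)).card
      = ∑ s ∈ S, (if f s ∈ itv j w then 1 else 0) := fun j => Finset.card_filter _ _
  calc ∑ j : Fin n, (S.filter (fun s => f s ∈ itv j w)).card
      = ∑ j : Fin n, ∑ s ∈ S, (if f s ∈ itv j w then 1 else 0) :=
        Finset.sum_congr rfl (fun j _ => h1 j)
    _ = ∑ s ∈ S, ∑ j : Fin n, (if f s ∈ itv j w then 1 else 0) := Finset.sum_comm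
    _ = ∑ s ∈ S, w := Finset.sum_congr rfl (fun s _ => by
          rw [← Finset.card_filter]
          exact filter_mem_itv_card (f s) hw)
    _ = S.card * w := by rw [Finset.sum_const, smul_eq_mul]
    _ = w * S.card := Nat.mul_comm _ _

section ProdLemmas

variable {α β : Type*} {G : SimpleGraph α} {H : SimpleGraph β}

/-- Left embedding into the strong product. -/
def homL (G : SimpleGraph α) (H : SimpleGraph β) (b : β) : G →g strongProd G H :=
  ⟨fun a => (a, b), fun h => Or.inl ⟨h, rfl⟩⟩

/-- Right embedding into the strong product. -/
def homR (G : SimpleGraph α) (H : SimpleGraph β) (a : α) : H →g strongProd G H :=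
  ⟨fun b => (a, b), fun h => Or.inr (Or.inl ⟨rfl, h⟩)⟩

lemma prod_connected (hG : G.Connected) (hH : H.Connected) :
    (strongProd G H).Connected := by
  rw [connected_iff]
  constructor
  · rintro ⟨a, b⟩ ⟨c, e⟩
    exact ((hG.preconnected a c).map (homL G H b)).trans ((hH.preconnected b e).map (homR G H c))
  · exact ⟨(hG.nonempty.some, hH.nonempty.some)⟩

lemma prod_dist_right (hG : G.Connected) (hH : H.Connected) (a : α) {b e : β}
    (q : H.Walk b e) : (strongProd G H).dist (a, b) (a, e) ≤ q.length := by
  induction q with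
  | nil => simp
  | @cons b b₁ e hadj q ih =>
    have h1 : (strongProd G H).Adj (a, b) (a, b₁) := Or.inr (Or.inl ⟨rfl, hadj⟩)
    calc (strongProd G H).dist (a, b) (a, e)
        ≤ (strongProd G H).dist (a, b) (a, b₁) + (strongProd G H).dist (a, b₁) (a, e) :=
          (prod_connected hG hH).dist_triangle
      _ ≤ 1 + q.length := add_le_add (dist_le_one_of_adj h1) ih
      _ ≤ (Walk.cons hadj q).length := by simp only [Walk.length_cons]; omega

lemma prod_dist_left (hG : G.Connected) (hH : H.Connected) (b : β) {a c : α}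
    (q : G.Walk a c) : (strongProd G H).dist (a, b) (c, b) ≤ q.length := by
  induction q with
  | nil => simp
  | @cons a a₁ c hadj q ih =>
    have h1 : (strongProd G H).Adj (a, b) (a₁, b) := Or.inl ⟨hadj, rfl⟩
    calc (strongProd G H).dist (a, b) (c, b)
        ≤ (strongProd G H).dist (a, b) (a₁, b) + (strongProd G H).dist (a₁, b) (c, b) :=
          (prod_connected hG hH).dist_triangle
      _ ≤ 1 + q.length := add_le_add (dist_le_one_of_adj h1) ih
      _ ≤ (Walk.cons hadj q).length := by simp only [Walk.length_cons]; omega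

lemma prod_dist_le_max (hG : G.Connected) (hH : H.Connected) :
    ∀ {a c : α} (w : G.Walk a c) {b e : β} (q : H.Walk b e),
      (strongProd G H).dist (a, b) (c, e) ≤ max w.length q.length := by
  intro a c w
  induction w with
  | nil =>
    intro b e q
    exact le_trans (prod_dist_right hG hH _ q) (le_max_right _ _)
  | @cons a a₁ c hadj w ih =>
    intro b e q
    cases q with
    | nil =>
      exact le_trans (prod_dist_left hG hH _ (Walk.cons hadj w)) (le_max_left _ _)
    | @cons b b₁ e hadj2 q =>
      have h1 : (strongProd G H).Adj (a, b) (a₁, b₁) := Or.inr (Or.inr ⟨hadj, hadj2⟩)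
      calc (strongProd G H).dist (a, b) (c, e)
          ≤ (strongProd G H).dist (a, b) (a₁, b₁) + (strongProd G H).dist (a₁, b₁) (c, e) :=
            (prod_connected hG hH).dist_triangle
        _ ≤ 1 + max w.length q.length := add_le_add (dist_le_one_of_adj h1) (ih q)
        _ ≤ max (Walk.cons hadj w).length (Walk.cons hadj2 q).length := by
            simp only [Walk.length_cons]; omega

lemma prod_dist_le (hG : G.Connected) (hH : H.Connected) {x y : α × β} {t : ℕ}
    (h1 : G.dist x.1 y.1 ≤ t) (h2 : H.dist x.2 y.2 ≤ t) :
    (strongProd G H).dist x y ≤ t := by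
  obtain ⟨w, hw⟩ := hG.exists_walk_length_eq_dist x.1 y.1
  obtain ⟨q, hq⟩ := hH.exists_walk_length_eq_dist x.2 y.2
  have := prod_dist_le_max hG hH w q
  have hx : x = (x.1, x.2) := rfl
  have hy : y = (y.1, y.2) := rfl
  rw [← hx, ← hy] at this
  omega

lemma prod_walk_proj (hG : G.Connected) (hH : H.Connected) {x y : α × β}
    (w : (strongProd G H).Walk x y) :
    G.dist x.1 y.1 ≤ w.length ∧ H.dist x.2 y.2 ≤ w.length := by
  induction w with
  | nil => simp
  | @cons x z y hadj w ih =>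
    have h1 : G.dist x.1 z.1 ≤ 1 := by
      rcases hadj with ⟨h, _⟩ | ⟨h, _⟩ | ⟨h, _⟩
      · exact dist_le_one_of_adj h
      · rw [h, SimpleGraph.dist_self]; exact Nat.zero_le 1
      · exact dist_le_one_of_adj h
    have h2 : H.dist x.2 z.2 ≤ 1 := by
      rcases hadj with ⟨_, h⟩ | ⟨_, h⟩ | ⟨_, h⟩
      · rw [h, SimpleGraph.dist_self]; exact Nat.zero_le 1
      · exact dist_le_one_of_adj h
      · exact dist_le_one_of_adj h
    constructor
    · calc G.dist x.1 y.1 ≤ G.dist x.1 z.1 + G.dist z.1 y.1 := hG.dist_triangle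
        _ ≤ 1 + w.length := add_le_add h1 ih.1
        _ ≤ (Walk.cons hadj w).length := by simp only [Walk.length_cons]; omega
    · calc H.dist x.2 y.2 ≤ H.dist x.2 z.2 + H.dist z.2 y.2 := hH.dist_triangle
        _ ≤ 1 + w.length := add_le_add h2 ih.2
        _ ≤ (Walk.cons hadj w).length := by simp only [Walk.length_cons]; omega

lemma prod_dist_ge (hG : G.Connected) (hH : H.Connected) (x y : α × β) :
    G.dist x.1 y.1 ≤ (strongProd G H).dist x y ∧
    H.dist x.2 y.2 ≤ (strongProd G H).dist x y := by
  obtain ⟨w, hw⟩ := (prod_connected hG hH).exists_walk_length_eq_dist x y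
  rw [← hw]
  exact prod_walk_proj hG hH w

end ProdLemmas

end GammaAux

open Finset in
theorem gamma_strongTorus_eq_top (d p : ℕ) (m n : ℕ) (hm : 3 ≤ m) (hn : 3 ≤ n)
    (h : distPackDomNum (cycleGraph m) d p = ⊤) :
    distPackDomNum (strongProd (cycleGraph m) (cycleGraph n)) d p = ⊤ := by
  haveI : NeZero m := ⟨by omega⟩
  haveI : NeZero n := ⟨by omega⟩
  have hm2 : 2 ≤ m := by omega
  have hn2 : 2 ≤ n := by omega
  have hGm : (cycleGraph m).Connected := GammaAux.cycle_connected
  have hGn : (cycleGraph n).Connected := GammaAux.cycle_connected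
  have hno : ∀ A : Finset (Fin m),
      ¬(IsDistDomSet (cycleGraph m) d A ∧ IsPacking (cycleGraph m) p A) := by
    rintro A ⟨h1, h2⟩
    have hle : distPackDomNum (cycleGraph m) d p ≤ (A.card : ℕ∞) :=
      sInf_le ⟨A, rfl, h1, h2⟩
    rw [h, top_le_iff] at hle
    exact ENat.coe_ne_top A.card hle
  by_contra hne
  have hex : ∃ S : Finset (Fin m × Fin n),
      IsDistDomSet (strongProd (cycleGraph m) (cycleGraph n)) d S ∧
      IsPacking (strongProd (cycleGraph m) (cycleGraph n)) p S := by
    by_contra hS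
    apply hne
    refine sInf_eq_top.mpr ?_
    rintro a ⟨S, rfl, h1, h2⟩
    exact (hS ⟨S, h1, h2⟩).elim
  obtain ⟨S, hdomS, hpackS⟩ := hex
  have hdom' : ∀ (x : Fin m) (i : Fin n), ∃ s ∈ S,
      (cycleGraph m).dist s.1 x ≤ d ∧ (cycleGraph n).dist s.2 i ≤ d := by
    intro x i
    obtain ⟨u, hu, hud⟩ := hdomS (x, i)
    have hp := GammaAux.prod_dist_ge hGm hGn u (x, i)
    exact ⟨u, hu, le_trans hp.1 hud, le_trans hp.2 hud⟩
  have hpack' : ∀ s ∈ S, ∀ t ∈ S, s ≠ t → (cycleGraph n).dist s.2 t.2 ≤ p →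
      p + 1 ≤ (cycleGraph m).dist s.1 t.1 := by
    intro s hs t ht hst hdn
    have h1 := hpackS s hs t ht hst
    rcases le_or_gt (p+1) ((cycleGraph m).dist s.1 t.1) with h2 | h2
    · exact h2
    · exfalso
      have h3 : (strongProd (cycleGraph m) (cycleGraph n)).dist s t ≤ p :=
        GammaAux.prod_dist_le hGm hGn (by omega) (by omega)
      omega
  -- Case A : m small
  rcases le_or_gt m (2*d+1) with hcase | hmbig
  · refine hno {0} ⟨fun v => ⟨0, Finset.mem_singleton_self 0,
      GammaAux.cycle_dist_half hm2 (by omega) 0 v⟩, ?_⟩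
    intro x hx y hy hxy
    rw [Finset.mem_singleton] at hx hy
    exact absurd (hx.trans hy.symm) hxy
  -- Case C : p ≥ 2d, slice at row 0
  rcases lt_or_ge (2*d) (p+1) with hpbig | hpd
  · refine hno ((S.filter (fun s => (cycleGraph n).dist s.2 0 ≤ d)).image Prod.fst) ⟨?_, ?_⟩
    · intro v
      obtain ⟨s, hs, h1, h2⟩ := hdom' v 0
      exact ⟨s.1, Finset.mem_image_of_mem _ (Finset.mem_filter.mpr ⟨hs, h2⟩), h1⟩
    · intro x hx y hy hxy
      obtain ⟨s, hs, hsx⟩ := Finset.mem_image.mp hx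
      obtain ⟨t, ht, hty⟩ := Finset.mem_image.mp hy
      obtain ⟨hsS, hsd⟩ := Finset.mem_filter.mp hs
      obtain ⟨htS, htd⟩ := Finset.mem_filter.mp ht
      subst hsx hty
      have hdn : (cycleGraph n).dist s.2 t.2 ≤ p := by
        have htr : (cycleGraph n).dist s.2 t.2 ≤
            (cycleGraph n).dist s.2 0 + (cycleGraph n).dist 0 t.2 := hGn.dist_triangle
        have hcomm : (cycleGraph n).dist 0 t.2 = (cycleGraph n).dist t.2 0 :=
          SimpleGraph.dist_comm
        omega
      exact hpack' s hsS t htS (fun he => hxy (by rw [he])) hdn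
  -- Case B : n small
  rcases le_or_gt n (2*p+1) with hcaseB | hnbig
  · refine hno (S.image Prod.fst) ⟨?_, ?_⟩
    · intro v
      obtain ⟨s, hs, h1, _⟩ := hdom' v 0
      exact ⟨s.1, Finset.mem_image_of_mem _ hs, h1⟩
    · intro x hx y hy hxy
      obtain ⟨s, hs, hsx⟩ := Finset.mem_image.mp hx
      obtain ⟨t, ht, hty⟩ := Finset.mem_image.mp hy
      subst hsx hty
      exact hpack' s hs t ht (fun he => hxy (by rw [he]))
        (GammaAux.cycle_dist_half hn2 (by omega) s.2 t.2)
  -- Case D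
  obtain ⟨r, hr1, hr2⟩ : ∃ r, 1 ≤ r ∧ 2*d = p + r := ⟨2*d - p, by omega, by omega⟩
  obtain ⟨K, hKdef⟩ : ∃ K, K = (m + 2*d) / (2*d+1) := ⟨_, rfl⟩
  have e1 := Nat.div_add_mod (m + 2*d) (2*d+1)
  rw [← hKdef] at e1
  have e2 : (m + 2*d) % (2*d+1) < 2*d+1 := Nat.mod_lt _ (by omega)
  have hK2 : 2 ≤ K := by
    by_contra hc
    push_neg at hc
    have hK01 : K = 0 ∨ K = 1 := by omega
    rcases hK01 with h0 | h0 <;> rw [h0] at e1 <;> simp at e1 <;> omega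
  have hprn : p + 1 ≤ n := by omega
  have hnum : (p+1) * K ≤ m := by
    by_contra hni
    push_neg at hni
    -- D1 : every (p+1)-row window has at most K-1 points
    have D1 : ∀ j : Fin n,
        (S.filter (fun s => s.2 ∈ GammaAux.itv j (p+1))).card ≤ K - 1 := by
      intro j
      have hrow : ∀ s ∈ S.filter (fun s => s.2 ∈ GammaAux.itv j (p+1)),
          ∀ t ∈ S.filter (fun s => s.2 ∈ GammaAux.itv j (p+1)),
          (cycleGraph n).dist s.2 t.2 ≤ p := by
        intro s hs t ht
        have h1 := (Finset.mem_filter.mp hs).2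
        have h2 := (Finset.mem_filter.mp ht).2
        have := GammaAux.itv_dist_le hn2 h1 h2
        omega
      set A := (S.filter (fun s => s.2 ∈ GammaAux.itv j (p+1))).image Prod.fst with hA
      have hApack : ∀ x ∈ A, ∀ y ∈ A, x ≠ y → p + 1 ≤ (cycleGraph m).dist x y := by
        intro x hx y hy hxy
        obtain ⟨s, hs, hsx⟩ := Finset.mem_image.mp hx
        obtain ⟨t, ht, hty⟩ := Finset.mem_image.mp hy
        subst hsx hty
        exact hpack' s (Finset.mem_filter.mp hs).1 t (Finset.mem_filter.mp ht).1
          (fun he => hxy (by rw [he])) (hrow s hs t ht)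
      have hcardeq : A.card = (S.filter (fun s => s.2 ∈ GammaAux.itv j (p+1))).card := by
        rw [hA]
        apply Finset.card_image_of_injOn
        intro s hs t ht hst
        by_contra hne2
        have hbig := hpack' s (Finset.mem_filter.mp (Finset.mem_coe.mp hs)).1 t
          (Finset.mem_filter.mp (Finset.mem_coe.mp ht)).1 hne2
          (hrow s (Finset.mem_coe.mp hs) t (Finset.mem_coe.mp ht))
        rw [hst, SimpleGraph.dist_self] at hbig
        omega
      rcases le_or_gt A.card 1 with hA1 | hA1
      · omega
      · have hbound := GammaAux.packing_card_mul_le hm2 hA1 hApack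
        have hlt : A.card * (p+1) < K * (p+1) := by
          have hco : (p+1) * K = K * (p+1) := Nat.mul_comm _ _
          omega
        have := lt_of_mul_lt_mul_right hlt (Nat.zero_le _)
        omega
    -- D2 : every (2d+1)-row window yields at least K columns
    have D2 : ∀ j : Fin n,
        K ≤ ((S.filter (fun s => s.2 ∈ GammaAux.itv j (2*d+1))).image Prod.fst).card := by
      intro j
      set T := (S.filter (fun s => s.2 ∈ GammaAux.itv j (2*d+1))).image Prod.fst with hT
      have hTdom : ∀ v : Fin m, ∃ c ∈ T, (cycleGraph m).dist c v ≤ d := by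
        intro v
        obtain ⟨s, hs, h1, h2⟩ := hdom' v (j + (d : Fin n))
        rw [SimpleGraph.dist_comm] at h2
        have hmem : s.2 ∈ GammaAux.itv j (2*d+1) := by
          have hx := GammaAux.mem_itv_of_dist_le hn2 h2
          rwa [add_sub_cancel_right] at hx
        exact ⟨s.1, Finset.mem_image_of_mem _ (Finset.mem_filter.mpr ⟨hs, hmem⟩), h1⟩
      have hcard := GammaAux.dom_card_mul_ge hm2 hTdom
      rw [hKdef, Nat.div_le_iff_le_mul_add_pred (by omega)]
      have hco : T.card * (2*d+1) = (2*d+1) * T.card := Nat.mul_comm _ _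
      omega
    -- arithmetic on K
    have e3 : (2*d+1) * K = (p+1) * K + r * K := by
      rw [show 2*d+1 = (p+1) + r by omega, Nat.add_mul]
    obtain ⟨K₀, hK₀⟩ : ∃ K₀, K = K₀ + 1 := ⟨K - 1, by omega⟩
    have e4 : r * K = K₀ * r + r := by rw [hK₀]; ring
    have hKr : K₀ * r ≤ p - 1 := by omega
    have hrn : r ≤ n := by
      have hmul : 1 * r ≤ K₀ * r := Nat.mul_le_mul (by omega) (le_refl r)
      omega
    -- D3 : every r-row window contains a point
    have D3 : ∀ j : Fin n, 1 ≤ (S.filter (fun s => s.2 ∈ GammaAux.itv j r)).card := by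
      intro j
      have hTK := D2 j
      have hAle : ((S.filter (fun s => s.2 ∈ GammaAux.itv (j + (r : Fin n)) (p+1))).image
          Prod.fst).card ≤ K - 1 :=
        le_trans Finset.card_image_le (D1 _)
      set T := (S.filter (fun s => s.2 ∈ GammaAux.itv j (2*d+1))).image Prod.fst with hT
      set A := (S.filter (fun s => s.2 ∈ GammaAux.itv (j + (r : Fin n)) (p+1))).image
          Prod.fst with hA2
      obtain ⟨c, hcT, hcA⟩ : ∃ c, c ∈ T ∧ c ∉ A := by
        have hpos : 0 < (T \ A).card := by
          have := Finset.le_card_sdiff A T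
          omega
        obtain ⟨c, hc⟩ := Finset.card_pos.mp hpos
        exact ⟨c, (Finset.mem_sdiff.mp hc).1, (Finset.mem_sdiff.mp hc).2⟩
      obtain ⟨s, hsfil, hsc⟩ := Finset.mem_image.mp hcT
      obtain ⟨hsS, hsitv⟩ := Finset.mem_filter.mp hsfil
      obtain ⟨t, htlt, hteq⟩ := GammaAux.mem_itv.mp hsitv
      have htr : t < r := by
        by_contra hge
        push_neg at hge
        apply hcA
        have hmem2 : s.2 ∈ GammaAux.itv (j + (r : Fin n)) (p+1) := by
          refine GammaAux.mem_itv.mpr ⟨t - r, by omega, ?_⟩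
          rw [hteq, Nat.cast_sub hge]
          ring
        exact hsc ▸ Finset.mem_image_of_mem _ (Finset.mem_filter.mpr ⟨hsS, hmem2⟩)
      exact Finset.card_pos.mpr
        ⟨s, Finset.mem_filter.mpr ⟨hsS, GammaAux.mem_itv.mpr ⟨t, htr, hteq⟩⟩⟩
    -- D4 : double counting
    have hsum1 := GammaAux.sum_card_filter_itv S Prod.snd hrn
    have hsum2 := GammaAux.sum_card_filter_itv S Prod.snd hprn
    have hb1 : n ≤ r * S.card := by
      calc n = ∑ _j : Fin n, 1 := by simp
        _ ≤ ∑ j : Fin n, (S.filter (fun s => s.2 ∈ GammaAux.itv j r)).card :=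
          Finset.sum_le_sum (fun j _ => D3 j)
        _ = r * S.card := hsum1
    have hb2 : (p+1) * S.card ≤ n * K₀ := by
      calc (p+1) * S.card
          = ∑ j : Fin n, (S.filter (fun s => s.2 ∈ GammaAux.itv j (p+1))).card := hsum2.symm
        _ ≤ ∑ _j : Fin n, K₀ := Finset.sum_le_sum (fun j _ => by have := D1 j; omega)
        _ = n * K₀ := by simp [Finset.sum_const, mul_comm]
    have c1 : (p+1) * n ≤ (p+1) * (r * S.card) := Nat.mul_le_mul (le_refl _) hb1
    have c2 : (p+1) * (r * S.card) = ((p+1) * S.card) * r := by ring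
    have c3 : ((p+1) * S.card) * r ≤ (n * K₀) * r := Nat.mul_le_mul hb2 (le_refl _)
    have c4 : (n * K₀) * r = n * (K₀ * r) := by ring
    have c5 : n * (K₀ * r) ≤ n * (p-1) := Nat.mul_le_mul (le_refl _) hKr
    have c6 : n * (p-1) < n * (p+1) :=
      mul_lt_mul_of_pos_left (by omega) (by omega)
    have c7 : n * (p+1) = (p+1) * n := Nat.mul_comm _ _
    omega
  have hub : m ≤ (2*d+1) * K := by omega
  obtain ⟨A, hA1, hA2⟩ := GammaAux.cycle_feasible hm2 (by omega : 1 ≤ K) hnum hub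
  exact hno A ⟨hA1, hA2⟩
end

section
/- Let t be a nonnegative integer with t = 0 or t ≥ 2, and set d = ⌊5(t+1)/2⌋ and p = 3t+2. Then γ_d^p(C_{11(t+1)} ⊠ C_{11(t+1)}) ≤ 7 and γ_d^p(C_{11(t+1)}) = 3, so that γ_d^p(C_{11(t+1)} ⊠ C_{11(t+1)}) ≤ γ_d^p(C_{11(t+1)}) · γ_d^p(C_{11(t+1)}) − 2. -/
open SimpleGraph

/-- circular distance on `Fin n`. -/
def circ {n : ℕ} (a b : Fin n) : ℕ := min ((a - b).val) ((b - a).val)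

lemma circ_comm {n : ℕ} (a b : Fin n) : circ a b = circ b a := min_comm _ _

lemma circ_self {n : ℕ} [NeZero n] (a : Fin n) : circ a a = 0 := by
  simp [circ, sub_self]

lemma fin_val_add_le {n : ℕ} (a b : Fin n) : (a + b).val ≤ a.val + b.val := by
  rw [Fin.add_def]
  exact Nat.mod_le _ _

lemma fin_val_sub_of_le {n : ℕ} (a b : Fin n) (h : b.val ≤ a.val) :
    (a - b).val = a.val - b.val := by
  rw [Fin.sub_def]
  simp only
  have h1 : n - b.val + a.val = n + (a.val - b.val) := by omega
  rw [h1, Nat.add_mod_left, Nat.mod_eq_of_lt (by omega)]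

lemma circ_key {n : ℕ} (a b : Fin n) : min ((a - b).val) ((b - a).val) ≤ a.val + b.val := by
  rcases le_total b.val a.val with h | h
  · calc min ((a - b).val) ((b - a).val) ≤ (a - b).val := min_le_left _ _
      _ = a.val - b.val := fin_val_sub_of_le a b h
      _ ≤ a.val + b.val := by omega
  · calc min ((a - b).val) ((b - a).val) ≤ (b - a).val := min_le_right _ _
      _ = b.val - a.val := fin_val_sub_of_le b a h
      _ ≤ a.val + b.val := by omega

open Fin.CommRing in
lemma circ_triangle {n : ℕ} [NeZero n] (a b c : Fin n) : circ a c ≤ circ a b + circ b c := by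
  unfold circ
  rcases le_total ((a - b).val) ((b - a).val) with h1 | h1 <;>
    rcases le_total ((b - c).val) ((c - b).val) with h2 | h2
  · rw [min_eq_left h1, min_eq_left h2]
    have h3 : a - c = (a - b) + (b - c) := by ring
    calc min ((a - c).val) ((c - a).val) ≤ (a - c).val := min_le_left _ _
      _ = ((a - b) + (b - c)).val := by rw [h3]
      _ ≤ _ := fin_val_add_le _ _
  · rw [min_eq_left h1, min_eq_right h2]
    have h3 : (a - b) - (c - b) = a - c := by ring
    have h4 : (c - b) - (a - b) = c - a := by ring
    have := circ_key (a - b) (c - b)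
    rw [h3, h4] at this
    exact this
  · rw [min_eq_right h1, min_eq_left h2]
    have h3 : (b - c) - (b - a) = a - c := by ring
    have h4 : (b - a) - (b - c) = c - a := by ring
    have := circ_key (b - c) (b - a)
    rw [h3, h4] at this
    omega
  · rw [min_eq_right h1, min_eq_right h2]
    have h3 : c - a = (c - b) + (b - a) := by ring
    calc min ((a - c).val) ((c - a).val) ≤ (c - a).val := min_le_right _ _
      _ = ((c - b) + (b - a)).val := by rw [h3]
      _ ≤ _ := by rw [Nat.add_comm ((b-a).val)]; exact fin_val_add_le _ _

lemma circ_adj {n : ℕ} {u v : Fin n} (h : (cycleGraph n).Adj u v) : circ u v ≤ 1 := by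
  rw [cycleGraph_adj'] at h
  rcases h with h | h
  · exact le_trans (min_le_left _ _) (le_of_eq h)
  · exact le_trans (min_le_right _ _) (le_of_eq h)

lemma circ_le_walk_length {n : ℕ} [NeZero n] {u v : Fin n} (w : (cycleGraph n).Walk u v) :
    circ u v ≤ w.length := by
  induction w with
  | nil => simp [circ_self]
  | @cons a b c h w ih =>
    calc circ a c ≤ circ a b + circ b c := circ_triangle _ _ _
      _ ≤ 1 + w.length := Nat.add_le_add (circ_adj h) ih
      _ = _ := by simp [Walk.length_cons]; omega

lemma fin_val_one_of (n : ℕ) [NeZero n] (hn : 3 ≤ n) : ((1 : Fin n) : ℕ) = 1 := by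
  rw [Fin.val_one']
  exact Nat.mod_eq_of_lt (by omega)

open Fin.CommRing in
lemma exists_walk_val {n : ℕ} (hn : 3 ≤ n) :
    ∀ (k : ℕ) (i j : Fin n), (j - i).val = k →
      ∃ w : (cycleGraph n).Walk i j, w.length = k := by
  haveI : NeZero n := ⟨by omega⟩
  intro k
  induction k with
  | zero =>
    intro i j h
    have : j - i = 0 := Fin.ext (by simpa using h)
    have hij : j = i := by
      have := sub_eq_zero.mp this
      exact this
    subst hij
    exact ⟨Walk.nil, rfl⟩
  | succ k ih =>
    intro i j h
    have h1 : ((j - 1) - i).val = k := by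
      have e : (j - 1) - i = (j - i) - 1 := by ring
      rw [e, fin_val_sub_of_le]
      · rw [h, fin_val_one_of n hn]; omega
      · rw [fin_val_one_of n hn, h]; omega
    obtain ⟨w, hw⟩ := ih i (j - 1) h1
    have hadj : (cycleGraph n).Adj (j - 1) j := by
      rw [cycleGraph_adj']
      right
      have : j - (j - 1) = 1 := by ring
      rw [this, fin_val_one_of n hn]
    exact ⟨w.concat hadj, by rw [Walk.length_concat, hw]⟩

lemma cycle_reachable {n : ℕ} (hn : 3 ≤ n) (i j : Fin n) :
    (cycleGraph n).Reachable i j := by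
  obtain ⟨w, -⟩ := exists_walk_val hn ((j - i).val) i j rfl
  exact ⟨w⟩

lemma cycle_dist_eq_circ {n : ℕ} (hn : 3 ≤ n) (i j : Fin n) :
    (cycleGraph n).dist i j = circ i j := by
  haveI : NeZero n := ⟨by omega⟩
  apply le_antisymm
  · rcases le_total ((i - j).val) ((j - i).val) with h | h
    · obtain ⟨w, hw⟩ := exists_walk_val hn ((i - j).val) j i rfl
      calc (cycleGraph n).dist i j ≤ w.reverse.length := dist_le _
        _ = (i - j).val := by rw [Walk.length_reverse, hw]
        _ = circ i j := (min_eq_left h).symm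
    · obtain ⟨w, hw⟩ := exists_walk_val hn ((j - i).val) i j rfl
      calc (cycleGraph n).dist i j ≤ w.length := dist_le _
        _ = (j - i).val := hw
        _ = circ i j := (min_eq_right h).symm
  · obtain ⟨w, hw⟩ := (cycle_reachable hn i j).exists_walk_length_eq_dist
    rw [← hw]
    exact circ_le_walk_length w

variable {α β : Type*} {G : SimpleGraph α} {H : SimpleGraph β}

/-- embedding of `G` as a row of the strong product -/
def homLeft (b : β) : G →g strongProd G H :=
  ⟨fun g => (g, b), fun h => Or.inl ⟨h, rfl⟩⟩

def homRight (a : α) : H →g strongProd G H :=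
  ⟨fun h => (a, h), fun h => Or.inr (Or.inl ⟨rfl, h⟩)⟩

lemma proj_walk {x y : α × β} (w : (strongProd G H).Walk x y) :
    (∃ w1 : G.Walk x.1 y.1, w1.length ≤ w.length) ∧
      (∃ w2 : H.Walk x.2 y.2, w2.length ≤ w.length) := by
  induction w with
  | nil => exact ⟨⟨Walk.nil, le_refl _⟩, ⟨Walk.nil, le_refl _⟩⟩
  | @cons a z c h w ih =>
    obtain ⟨⟨w1, hw1⟩, ⟨w2, hw2⟩⟩ := ih
    constructor
    · rcases id h with ⟨h1, _⟩ | ⟨h1, _⟩ | ⟨h1, _⟩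
      · exact ⟨Walk.cons h1 w1, by simpa using Nat.succ_le_succ hw1⟩
      · exact ⟨w1.copy h1.symm rfl, by rw [Walk.length_copy]; simp; omega⟩
      · exact ⟨Walk.cons h1 w1, by simpa using Nat.succ_le_succ hw1⟩
    · rcases id h with ⟨_, h2⟩ | ⟨_, h2⟩ | ⟨_, h2⟩
      · exact ⟨w2.copy h2.symm rfl, by rw [Walk.length_copy]; simp; omega⟩
      · exact ⟨Walk.cons h2 w2, by simpa using Nat.succ_le_succ hw2⟩
      · exact ⟨Walk.cons h2 w2, by simpa using Nat.succ_le_succ hw2⟩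

lemma combine_walk : ∀ {a c : α} (w1 : G.Walk a c) {b e : β} (w2 : H.Walk b e),
    ∃ w : (strongProd G H).Walk (a, b) (c, e), w.length ≤ max w1.length w2.length := by
  intro a c w1
  induction w1 with
  | nil =>
    intro b e w2
    refine ⟨w2.map (homRight _), ?_⟩
    refine (Walk.length_map _ _).trans_le ?_
    exact le_max_right _ _
  | @cons a' z' c' h w1' ih =>
    intro b e w2
    cases w2 with
    | nil =>
      refine ⟨(Walk.cons h w1').map (homLeft _), ?_⟩
      refine (Walk.length_map _ _).trans_le ?_
      exact le_max_left _ _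
    | @cons b' z2 e' h2 w2' =>
      obtain ⟨w, hw⟩ := ih w2'
      refine ⟨Walk.cons (show (strongProd G H).Adj _ _ from Or.inr (Or.inr ⟨h, h2⟩)) w, ?_⟩
      simp only [Walk.length_cons]
      omega

lemma prod_dist_le {a c : α} {b e : β} (h1 : G.Reachable a c) (h2 : H.Reachable b e) :
    (strongProd G H).dist (a, b) (c, e) ≤ max (G.dist a c) (H.dist b e) := by
  obtain ⟨w1, hw1⟩ := h1.exists_walk_length_eq_dist
  obtain ⟨w2, hw2⟩ := h2.exists_walk_length_eq_dist
  obtain ⟨w, hw⟩ := combine_walk w1 w2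
  calc (strongProd G H).dist (a, b) (c, e) ≤ w.length := dist_le _
    _ ≤ max w1.length w2.length := hw
    _ = _ := by rw [hw1, hw2]

lemma prod_dist_ge_left {a c : α} {b e : β} (hr : (strongProd G H).Reachable (a, b) (c, e)) :
    G.dist a c ≤ (strongProd G H).dist (a, b) (c, e) := by
  obtain ⟨w, hw⟩ := hr.exists_walk_length_eq_dist
  obtain ⟨⟨w1, hw1⟩, -⟩ := proj_walk w
  calc G.dist a c ≤ w1.length := dist_le _
    _ ≤ w.length := hw1
    _ = _ := hw

lemma prod_dist_ge_right {a c : α} {b e : β} (hr : (strongProd G H).Reachable (a, b) (c, e)) :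
    H.dist b e ≤ (strongProd G H).dist (a, b) (c, e) := by
  obtain ⟨w, hw⟩ := hr.exists_walk_length_eq_dist
  obtain ⟨-, ⟨w2, hw2⟩⟩ := proj_walk w
  calc H.dist b e ≤ w2.length := dist_le _
    _ ≤ w.length := hw2
    _ = _ := hw

lemma circ_mk {n : ℕ} (a b : ℕ) (ha : a < n) (hb : b < n) (hba : b ≤ a) :
    circ (⟨a, ha⟩ : Fin n) ⟨b, hb⟩ = min (a - b) (n - (a - b)) := by
  haveI : NeZero n := ⟨by omega⟩
  rcases eq_or_lt_of_le hba with rfl | hlt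
  · rw [circ_self]
    omega
  · unfold circ
    have h1 : ((⟨a, ha⟩ - ⟨b, hb⟩ : Fin n)).val = a - b := fin_val_sub_of_le _ _ (by simpa)
    have h2 : ((⟨b, hb⟩ - ⟨a, ha⟩ : Fin n)).val = n - (a - b) := by
      rw [Fin.sub_def]
      simp only
      have e : n - a + b = n - (a - b) := by omega
      rw [e, Nat.mod_eq_of_lt (by omega)]
    rw [h1, h2]

/-- scaling embedding `Fin 11 → Fin (11*s)` -/
def emb (s : ℕ) (hs : 1 ≤ s) (q : Fin 11) : Fin (11 * s) :=
  ⟨s * q.val, by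
    have h := q.isLt
    calc s * q.val ≤ s * 10 := Nat.mul_le_mul_left s (by omega)
      _ < 11 * s := by omega⟩

lemma emb_inj (s : ℕ) (hs : 1 ≤ s) : Function.Injective (emb s hs) := by
  intro a b h
  have := congrArg Fin.val h
  simp only [emb] at this
  exact Fin.ext (Nat.eq_of_mul_eq_mul_left (by omega) this)

lemma circ_emb (s : ℕ) (hs : 1 ≤ s) (a b : Fin 11) :
    circ (emb s hs a) (emb s hs b) = s * circ a b := by
  have key : ∀ x y : Fin 11, y.val ≤ x.val →
      circ (emb s hs x) (emb s hs y) = s * circ x y := by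
    intro x y hxy
    have hx := x.isLt
    have hy := y.isLt
    have h1 : circ (emb s hs x) (emb s hs y)
        = min (s * x.val - s * y.val) (11 * s - (s * x.val - s * y.val)) := by
      unfold emb
      exact circ_mk _ _ _ _ (Nat.mul_le_mul_left s hxy)
    have h2 : circ x y = min (x.val - y.val) (11 - (x.val - y.val)) := by
      have ex : x = ⟨x.val, hx⟩ := rfl
      have ey : y = ⟨y.val, hy⟩ := rfl
      rw [ex, ey]
      exact circ_mk _ _ _ _ hxy
    rw [h1, h2]
    have e1 : s * x.val - s * y.val = s * (x.val - y.val) := by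
      rw [Nat.mul_sub]
    rw [e1, ← min_mul_mul_left]
    have e2 : s * (11 - (x.val - y.val)) = 11 * s - s * (x.val - y.val) := by
      rw [Nat.mul_sub]
      ring_nf
    rw [e2]
  rcases le_total b.val a.val with h | h
  · exact key a b h
  · rw [circ_comm, circ_comm a b]
    exact key b a h

lemma round_to_mult {s m : ℕ} (hs : 1 ≤ s) (hm : m < 11 * s) :
    ∃ q : Fin 11, circ (⟨m, hm⟩ : Fin (11 * s)) (emb s hs q) ≤ s / 2 := by
  set q0 := (2 * m + s) / (2 * s) with hq0
  have hdm : 2 * s * q0 + (2 * m + s) % (2 * s) = 2 * m + s := Nat.div_add_mod _ _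
  set r := (2 * m + s) % (2 * s) with hrdef
  have hrlt : r < 2 * s := Nat.mod_lt _ (by omega)
  have hq0le : q0 ≤ 11 := by
    have h12 : (2 * m + s) / (2 * s) < 12 :=
      Nat.div_lt_of_lt_mul (by omega : 2 * m + s < (2 * s) * 12)
    omega
  have hdm2 : 2 * (s * q0) + r = 2 * m + s := by rw [← hdm]; ring
  rcases eq_or_lt_of_le hq0le with hq | hq
  · refine ⟨⟨0, by omega⟩, ?_⟩
    have he : emb s hs ⟨0, by omega⟩ = ⟨0, by omega⟩ := by
      apply Fin.ext
      simp [emb]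
    rw [he, circ_mk m 0 hm (by omega) (by omega)]
    have hdm3 : 2 * (s * 11) + r = 2 * m + s := by rw [← hq]; exact hdm2
    omega
  · refine ⟨⟨q0, by omega⟩, ?_⟩
    have hK : s * q0 ≤ s * 10 := Nat.mul_le_mul_left s (by omega)
    rcases le_total (s * q0) m with hle | hle
    · have he : circ (⟨m, hm⟩ : Fin (11 * s)) (emb s hs ⟨q0, by omega⟩)
          = min (m - s * q0) (11 * s - (m - s * q0)) := by
        unfold emb
        exact circ_mk _ _ _ _ hle
      rw [he]
      generalize hg : s * q0 = K at hK hdm2 hle ⊢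
      omega
    · have he : circ (⟨m, hm⟩ : Fin (11 * s)) (emb s hs ⟨q0, by omega⟩)
          = min (s * q0 - m) (11 * s - (s * q0 - m)) := by
        rw [circ_comm]
        unfold emb
        exact circ_mk _ _ _ _ hle
      rw [he]
      generalize hg : s * q0 = K at hK hdm2 hle ⊢
      omega

def basePts : List (Fin 11 × Fin 11) := [(0,0),(1,3),(2,6),(3,9),(6,1),(7,4),(8,7)]

def baseC : List (Fin 11) := [0,4,8]

set_option maxRecDepth 40000 in
lemma base_cover : ∀ q1 q2 : Fin 11, ∃ p ∈ basePts, circ q1 p.1 ≤ 2 ∧ circ q2 p.2 ≤ 2 := by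
  decide

set_option maxRecDepth 40000 in
lemma base_pack : ∀ p ∈ basePts, ∀ p' ∈ basePts, p ≠ p' →
    3 ≤ circ p.1 p'.1 ∨ 3 ≤ circ p.2 p'.2 := by decide

lemma baseC_cover : ∀ q : Fin 11, ∃ u ∈ baseC, circ q u ≤ 2 := by decide

lemma baseC_pack : ∀ u ∈ baseC, ∀ v ∈ baseC, u ≠ v → 3 ≤ circ u v := by decide

lemma dom_card_ge {s : ℕ} (hs : s = 1 ∨ 3 ≤ s) (S : Finset (Fin (11 * s)))
    (hdom : IsDistDomSet (cycleGraph (11 * s)) (5 * s / 2) S) : 3 ≤ S.card := by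
  have hs1 : 1 ≤ s := by omega
  have hn3 : 3 ≤ 11 * s := by omega
  haveI : NeZero (11 * s) := ⟨by omega⟩
  set d := 5 * s / 2 with hd
  by_contra hlt
  push_neg at hlt
  have hball : ∀ u : Fin (11 * s),
      (Finset.univ.filter (fun v => (cycleGraph (11 * s)).dist u v ≤ d)).card ≤ 2 * d + 1 := by
    intro u
    have := Finset.card_le_card_of_injOn
      (s := Finset.univ.filter (fun v => (cycleGraph (11 * s)).dist u v ≤ d))
      (f := fun v : Fin (11 * s) => if (v - u).val ≤ d then (v - u).val else d + (u - v).val)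
      (t := Finset.range (2 * d + 1)) ?_ ?_
    · simpa using this
    · intro v hv
      simp only [Finset.mem_coe, Finset.mem_filter, Finset.mem_univ, true_and] at hv
      rw [cycle_dist_eq_circ hn3] at hv
      unfold circ at hv
      rw [Finset.mem_coe, Finset.mem_range]
      simp only
      split_ifs with h
      · omega
      · omega
    · intro v hv w hw heq
      simp only [Finset.mem_coe, Finset.mem_filter, Finset.mem_univ, true_and] at hv hw
      rw [cycle_dist_eq_circ hn3] at hv hw
      unfold circ at hv hw
      have key : ∀ z : Fin (11 * s), (u - z).val = 0 → (z - u).val = 0 := by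
        intro z hz
        have h0 : u - z = 0 := Fin.ext (by simpa using hz)
        have hz2 : u = z := sub_eq_zero.mp h0
        rw [hz2, sub_self]
        simp
      simp only at heq
      split_ifs at heq with h1 h2 h2
      · have : v - u = w - u := Fin.ext heq
        exact sub_left_injective this
      · exfalso
        have h0 : (u - w).val ≠ 0 := by
          intro h0
          have := key w h0
          omega
        omega
      · exfalso
        have h0 : (u - v).val ≠ 0 := by
          intro h0
          have := key v h0
          omega
        omega
      · have : u - v = u - w := Fin.ext (by omega)
        exact sub_right_injective this
  have hsub : (Finset.univ : Finset (Fin (11 * s))) ⊆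
      S.biUnion (fun u => Finset.univ.filter (fun v => (cycleGraph (11 * s)).dist u v ≤ d)) := by
    intro v _
    obtain ⟨u, hu, hle⟩ := hdom v
    exact Finset.mem_biUnion.mpr ⟨u, hu, Finset.mem_filter.mpr ⟨Finset.mem_univ _, hle⟩⟩
  have hcard : 11 * s ≤ S.card * (2 * d + 1) := by
    calc 11 * s = (Finset.univ : Finset (Fin (11 * s))).card := by
          rw [Finset.card_univ, Fintype.card_fin]
      _ ≤ _ := Finset.card_le_card hsub
      _ ≤ ∑ u ∈ S, (Finset.univ.filter (fun v => (cycleGraph (11 * s)).dist u v ≤ d)).card :=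
          Finset.card_biUnion_le
      _ ≤ ∑ _u ∈ S, (2 * d + 1) := Finset.sum_le_sum (fun u _ => hball u)
      _ = S.card * (2 * d + 1) := by rw [Finset.sum_const, smul_eq_mul]
  have h2 : S.card * (2 * d + 1) ≤ 2 * (2 * d + 1) := Nat.mul_le_mul_right _ (by omega)
  omega

def SCset (s : ℕ) (hs1 : 1 ≤ s) : Finset (Fin (11 * s)) := (baseC.map (emb s hs1)).toFinset

def SPset (s : ℕ) (hs1 : 1 ≤ s) : Finset (Fin (11 * s) × Fin (11 * s)) :=
  (basePts.map (fun q => (emb s hs1 q.1, emb s hs1 q.2))).toFinset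

lemma SC_card (s : ℕ) (hs1 : 1 ≤ s) : (SCset s hs1).card = 3 := by
  unfold SCset
  rw [List.toFinset_card_of_nodup ((by decide : baseC.Nodup).map (emb_inj s hs1))]
  simp [baseC]

lemma SP_card (s : ℕ) (hs1 : 1 ≤ s) : (SPset s hs1).card = 7 := by
  unfold SPset
  have hinj : Function.Injective (fun q : Fin 11 × Fin 11 => (emb s hs1 q.1, emb s hs1 q.2)) := by
    intro a b h
    simp only [Prod.mk.injEq] at h
    exact Prod.ext (emb_inj s hs1 h.1) (emb_inj s hs1 h.2)
  rw [List.toFinset_card_of_nodup ((by decide : basePts.Nodup).map hinj)]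
  simp [basePts]

lemma SC_dom (s d : ℕ) (hs1 : 1 ≤ s) (hd : s / 2 + s * 2 ≤ d) :
    IsDistDomSet (cycleGraph (11 * s)) d (SCset s hs1) := by
  have hn3 : 3 ≤ 11 * s := by omega
  haveI : NeZero (11 * s) := ⟨by omega⟩
  rintro ⟨m, hm⟩
  obtain ⟨q, hq⟩ := round_to_mult hs1 hm
  obtain ⟨u, huB, hucirc⟩ := baseC_cover q
  refine ⟨emb s hs1 u, ?_, ?_⟩
  · exact List.mem_toFinset.mpr (List.mem_map.mpr ⟨u, huB, rfl⟩)
  · rw [cycle_dist_eq_circ hn3]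
    calc circ (emb s hs1 u) ⟨m, hm⟩
        ≤ circ (emb s hs1 u) (emb s hs1 q) + circ (emb s hs1 q) ⟨m, hm⟩ := circ_triangle _ _ _
      _ ≤ s * 2 + s / 2 := by
          apply Nat.add_le_add
          · rw [circ_emb]
            exact Nat.mul_le_mul_left s (by rw [circ_comm]; exact hucirc)
          · rw [circ_comm]; exact hq
      _ ≤ d := by omega

lemma SC_pack (s p : ℕ) (hs1 : 1 ≤ s) (hp : p + 1 = 3 * s) :
    IsPacking (cycleGraph (11 * s)) p (SCset s hs1) := by
  have hn3 : 3 ≤ 11 * s := by omega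
  haveI : NeZero (11 * s) := ⟨by omega⟩
  intro x hx y hy hxy
  obtain ⟨a, haB, rfl⟩ := List.mem_map.mp (List.mem_toFinset.mp hx)
  obtain ⟨b, hbB, rfl⟩ := List.mem_map.mp (List.mem_toFinset.mp hy)
  have hab : a ≠ b := fun h => hxy (by rw [h])
  have h3 := baseC_pack a haB b hbB hab
  rw [cycle_dist_eq_circ hn3, circ_emb]
  calc p + 1 = 3 * s := hp
    _ ≤ circ a b * s := Nat.mul_le_mul h3 (le_refl s)
    _ = s * circ a b := Nat.mul_comm _ _

lemma SP_dom (s d : ℕ) (hs1 : 1 ≤ s) (hd : s / 2 + s * 2 ≤ d) :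
    IsDistDomSet (strongProd (cycleGraph (11 * s)) (cycleGraph (11 * s))) d (SPset s hs1) := by
  have hn3 : 3 ≤ 11 * s := by omega
  haveI : NeZero (11 * s) := ⟨by omega⟩
  rintro ⟨⟨m1, hm1⟩, ⟨m2, hm2⟩⟩
  obtain ⟨q1, hq1⟩ := round_to_mult hs1 hm1
  obtain ⟨q2, hq2⟩ := round_to_mult hs1 hm2
  obtain ⟨p0, hp0B, hc1, hc2⟩ := base_cover q1 q2
  refine ⟨(emb s hs1 p0.1, emb s hs1 p0.2), ?_, ?_⟩
  · exact List.mem_toFinset.mpr (List.mem_map.mpr ⟨p0, hp0B, rfl⟩)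
  · have key : ∀ (m : ℕ) (hm : m < 11 * s) (q : Fin 11) (pc : Fin 11),
        circ (⟨m, hm⟩ : Fin (11 * s)) (emb s hs1 q) ≤ s / 2 → circ q pc ≤ 2 →
        (cycleGraph (11 * s)).dist (emb s hs1 pc) ⟨m, hm⟩ ≤ d := by
      intro m hm q pc h1 h2
      rw [cycle_dist_eq_circ hn3]
      calc circ (emb s hs1 pc) ⟨m, hm⟩
          ≤ circ (emb s hs1 pc) (emb s hs1 q) + circ (emb s hs1 q) ⟨m, hm⟩ := circ_triangle _ _ _
        _ ≤ s * 2 + s / 2 := by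
            apply Nat.add_le_add
            · rw [circ_emb]
              exact Nat.mul_le_mul_left s (by rw [circ_comm]; exact h2)
            · rw [circ_comm]; exact h1
        _ ≤ d := by omega
    calc (strongProd (cycleGraph (11 * s)) (cycleGraph (11 * s))).dist
          (emb s hs1 p0.1, emb s hs1 p0.2) (⟨m1, hm1⟩, ⟨m2, hm2⟩)
        ≤ max ((cycleGraph (11 * s)).dist (emb s hs1 p0.1) ⟨m1, hm1⟩)
            ((cycleGraph (11 * s)).dist (emb s hs1 p0.2) ⟨m2, hm2⟩) :=
          prod_dist_le (cycle_reachable hn3 _ _) (cycle_reachable hn3 _ _)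
      _ ≤ d := max_le (key m1 hm1 q1 p0.1 hq1 hc1) (key m2 hm2 q2 p0.2 hq2 hc2)

lemma SP_pack (s p : ℕ) (hs1 : 1 ≤ s) (hp : p + 1 = 3 * s) :
    IsPacking (strongProd (cycleGraph (11 * s)) (cycleGraph (11 * s))) p (SPset s hs1) := by
  have hn3 : 3 ≤ 11 * s := by omega
  haveI : NeZero (11 * s) := ⟨by omega⟩
  intro x hx y hy hxy
  obtain ⟨a, haB, rfl⟩ := List.mem_map.mp (List.mem_toFinset.mp hx)
  obtain ⟨b, hbB, rfl⟩ := List.mem_map.mp (List.mem_toFinset.mp hy)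
  have hab : a ≠ b := fun h => hxy (by rw [h])
  have hr : (strongProd (cycleGraph (11 * s)) (cycleGraph (11 * s))).Reachable
      (emb s hs1 a.1, emb s hs1 a.2) (emb s hs1 b.1, emb s hs1 b.2) := by
    obtain ⟨w1⟩ := cycle_reachable hn3 (emb s hs1 a.1) (emb s hs1 b.1)
    obtain ⟨w2⟩ := cycle_reachable hn3 (emb s hs1 a.2) (emb s hs1 b.2)
    obtain ⟨w, -⟩ := combine_walk w1 w2
    exact ⟨w⟩
  rcases base_pack a haB b hbB hab with h3 | h3
  · calc p + 1 = 3 * s := hp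
      _ ≤ circ a.1 b.1 * s := Nat.mul_le_mul h3 (le_refl s)
      _ = s * circ a.1 b.1 := Nat.mul_comm _ _
      _ = (cycleGraph (11 * s)).dist (emb s hs1 a.1) (emb s hs1 b.1) := by
          rw [cycle_dist_eq_circ hn3, circ_emb]
      _ ≤ _ := prod_dist_ge_left hr
  · calc p + 1 = 3 * s := hp
      _ ≤ circ a.2 b.2 * s := Nat.mul_le_mul h3 (le_refl s)
      _ = s * circ a.2 b.2 := Nat.mul_comm _ _
      _ = (cycleGraph (11 * s)).dist (emb s hs1 a.2) (emb s hs1 b.2) := by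
          rw [cycle_dist_eq_circ hn3, circ_emb]
      _ ≤ _ := prod_dist_ge_right hr


theorem gamma_C11t (t : ℕ) (ht : t = 0 ∨ 2 ≤ t) (d p : ℕ)
    (hd : d = 5 * (t + 1) / 2) (hpp : p = 3 * t + 2) :
    distPackDomNum (strongProd (cycleGraph (11 * (t + 1))) (cycleGraph (11 * (t + 1)))) d p ≤ 7 ∧
    distPackDomNum (cycleGraph (11 * (t + 1))) d p = 3 ∧
    distPackDomNum (strongProd (cycleGraph (11 * (t + 1))) (cycleGraph (11 * (t + 1)))) d p ≤
      distPackDomNum (cycleGraph (11 * (t + 1))) d p *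
        distPackDomNum (cycleGraph (11 * (t + 1))) d p - 2 := by
  set s := t + 1 with hsdef
  have hs1 : 1 ≤ s := by omega
  have hsor : s = 1 ∨ 3 ≤ s := by omega
  have hdb : s / 2 + s * 2 ≤ d := by rw [hd]; omega
  have hdb' : d = 5 * s / 2 := hd
  have hp3 : p + 1 = 3 * s := by omega
  have h1 : distPackDomNum (strongProd (cycleGraph (11 * s)) (cycleGraph (11 * s))) d p ≤ 7 := by
    apply sInf_le
    refine ⟨SPset s hs1, ?_, SP_dom s d hs1 hdb, SP_pack s p hs1 hp3⟩
    rw [SP_card]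
    norm_num
  have h2 : distPackDomNum (cycleGraph (11 * s)) d p = 3 := by
    apply le_antisymm
    · apply sInf_le
      refine ⟨SCset s hs1, ?_, SC_dom s d hs1 hdb, SC_pack s p hs1 hp3⟩
      rw [SC_card]
      norm_num
    · apply le_sInf
      rintro b ⟨S, rfl, hdom, -⟩
      have h3 : 3 ≤ S.card := dom_card_ge hsor S (by rw [← hdb']; exact hdom)
      exact_mod_cast h3
  refine ⟨h1, h2, ?_⟩
  rw [h2]
  have : (3 : ℕ∞) * 3 - 2 = 7 := by decide
  rw [this]
  exact h1
end

section
/- For all nonnegative integers d and p and all integers m ≥ 3 and n ≥ 3, the inequality n · ⌈m/(2d+1)⌉ ≤ (2d+1) · γ_d^p(C_m ⊠ C_n) holds (interpreted in ℕ ∪ {∞}); equivalently, ⌈m/(2d+1)⌉ · n/(2d+1) ≤ γ_d^p(C_m ⊠ C_n). -/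
open SimpleGraph

lemma walk_proj1 {α β : Type*} {G : SimpleGraph α} {H : SimpleGraph β} {u v : α × β}
    (w : (strongProd G H).Walk u v) : ∃ w' : G.Walk u.1 v.1, w'.length ≤ w.length := by
  induction w with
  | nil => exact ⟨Walk.nil, le_rfl⟩
  | @cons x b y h w ih =>
    obtain ⟨w', hw'⟩ := ih
    rcases h with ⟨h1, h2⟩ | ⟨h1, h2⟩ | ⟨h1, h2⟩
    · exact ⟨Walk.cons h1 w', by change _ ≤ w.length + 1; simp only [Walk.length_cons, Walk.length_copy]; omega⟩
    · exact ⟨w'.copy h1.symm rfl, by change _ ≤ w.length + 1; simp only [Walk.length_cons, Walk.length_copy]; omega⟩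
    · exact ⟨Walk.cons h1 w', by change _ ≤ w.length + 1; simp only [Walk.length_cons, Walk.length_copy]; omega⟩

lemma walk_proj2 {α β : Type*} {G : SimpleGraph α} {H : SimpleGraph β} {u v : α × β}
    (w : (strongProd G H).Walk u v) : ∃ w' : H.Walk u.2 v.2, w'.length ≤ w.length := by
  induction w with
  | nil => exact ⟨Walk.nil, le_rfl⟩
  | @cons x b y h w ih =>
    obtain ⟨w', hw'⟩ := ih
    rcases h with ⟨h1, h2⟩ | ⟨h1, h2⟩ | ⟨h1, h2⟩
    · exact ⟨w'.copy h2.symm rfl, by change _ ≤ w.length + 1; simp only [Walk.length_cons, Walk.length_copy]; omega⟩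
    · exact ⟨Walk.cons h2 w', by change _ ≤ w.length + 1; simp only [Walk.length_cons, Walk.length_copy]; omega⟩
    · exact ⟨Walk.cons h2 w', by change _ ≤ w.length + 1; simp only [Walk.length_cons, Walk.length_copy]; omega⟩

lemma dist_proj1 {α β : Type*} {G : SimpleGraph α} {H : SimpleGraph β} {u v : α × β} {d : ℕ}
    (hr : (strongProd G H).Reachable u v) (hd : (strongProd G H).dist u v ≤ d) :
    G.dist u.1 v.1 ≤ d := by
  obtain ⟨w, hw⟩ := hr.exists_walk_length_eq_dist
  obtain ⟨w', hw'⟩ := walk_proj1 w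
  exact (SimpleGraph.dist_le w').trans (hw'.trans (hw.le.trans hd))

lemma dist_proj2 {α β : Type*} {G : SimpleGraph α} {H : SimpleGraph β} {u v : α × β} {d : ℕ}
    (hr : (strongProd G H).Reachable u v) (hd : (strongProd G H).dist u v ≤ d) :
    H.dist u.2 v.2 ≤ d := by
  obtain ⟨w, hw⟩ := hr.exists_walk_length_eq_dist
  obtain ⟨w', hw'⟩ := walk_proj2 w
  exact (SimpleGraph.dist_le w').trans (hw'.trans (hw.le.trans hd))

lemma strongProd_preconnected {α β : Type*} {G : SimpleGraph α} {H : SimpleGraph β}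
    (hG : G.Preconnected) (hH : H.Preconnected) : (strongProd G H).Preconnected := by
  intro x y
  have r1 : (strongProd G H).Reachable (x.1, x.2) (y.1, x.2) :=
    (hG x.1 y.1).map (⟨fun a => (a, x.2), fun h => Or.inl ⟨h, rfl⟩⟩ : G →g strongProd G H)
  have r2 : (strongProd G H).Reachable (y.1, x.2) (y.1, y.2) :=
    (hH x.2 y.2).map (⟨fun b => (y.1, b), fun h => Or.inr (Or.inl ⟨rfl, h⟩)⟩ : H →g strongProd G H)
  exact r1.trans r2

open Fin.CommRing in
lemma walk_sub {k : ℕ} {u v : Fin (k + 3)} (w : (cycleGraph (k + 3)).Walk u v) :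
    ∃ z : ℤ, z.natAbs ≤ w.length ∧ v - u = (z : Fin (k + 3)) := by
  induction w with
  | nil => exact ⟨0, by simp⟩
  | @cons x b y h w ih =>
    obtain ⟨z, hz, hzv⟩ := ih
    have h' := (cycleGraph_adj (n := k + 1)).mp h
    rcases h' with h | h

    · refine ⟨z - 1, by simp only [Walk.length_cons]; omega, ?_⟩
      have hbx : b - x = -1 := by rw [← neg_sub, h]
      calc y - x = (y - b) + (b - x) := by ring
      _ = (z : Fin (k+3)) + (-1) := by rw [hzv, hbx]
      _ = ((z - 1 : ℤ) : Fin (k+3)) := by push_cast; ring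
    · refine ⟨z + 1, by simp only [Walk.length_cons]; omega, ?_⟩
      calc y - x = (y - b) + (b - x) := by ring
      _ = (z : Fin (k+3)) + 1 := by rw [hzv, h]
      _ = ((z + 1 : ℤ) : Fin (k+3)) := by push_cast; ring

open Fin.CommRing in
lemma ball_card (k d : ℕ) (u : Fin (k + 3)) :
    (Finset.univ.filter fun v => (cycleGraph (k + 3)).dist u v ≤ d).card ≤ 2 * d + 1 := by
  classical
  have hsub : (Finset.univ.filter fun v => (cycleGraph (k + 3)).dist u v ≤ d) ⊆
      (Finset.Icc (-(d : ℤ)) d).image (fun z : ℤ => u + (z : Fin (k + 3))) := by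
    intro v hv
    rw [Finset.mem_filter] at hv
    obtain ⟨w, hw⟩ := (cycleGraph_preconnected u v).exists_walk_length_eq_dist
    obtain ⟨z, hz1, hz2⟩ := walk_sub w
    rw [Finset.mem_image]
    refine ⟨z, Finset.mem_Icc.mpr (by omega), ?_⟩
    rw [← hz2]; ring
  calc (Finset.univ.filter fun v => (cycleGraph (k + 3)).dist u v ≤ d).card
      ≤ ((Finset.Icc (-(d : ℤ)) d).image (fun z : ℤ => u + (z : Fin (k + 3)))).card :=
        Finset.card_le_card hsub
    _ ≤ (Finset.Icc (-(d : ℤ)) d).card := Finset.card_image_le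
    _ = 2 * d + 1 := by rw [Int.card_Icc]; omega

lemma key_count {m' n' d : ℕ} (S : Finset (Fin (m' + 3) × Fin (n' + 3)))
    (hS : IsDistDomSet (strongProd (cycleGraph (m' + 3)) (cycleGraph (n' + 3))) d S) :
    (n' + 3) * ((m' + 3 + 2 * d) / (2 * d + 1)) ≤ (2 * d + 1) * S.card := by
  classical
  set G := strongProd (cycleGraph (m' + 3)) (cycleGraph (n' + 3)) with hG
  have hrow : ∀ j : Fin (n' + 3), (m' + 3 + 2 * d) / (2 * d + 1) ≤
      (S.filter fun u => (cycleGraph (n' + 3)).dist u.2 j ≤ d).card := by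
    intro j
    set T := S.filter fun u => (cycleGraph (n' + 3)).dist u.2 j ≤ d with hT
    have hcover : (Finset.univ : Finset (Fin (m' + 3))) ⊆
        T.biUnion (fun u => Finset.univ.filter fun i => (cycleGraph (m' + 3)).dist u.1 i ≤ d) := by
      intro i _
      obtain ⟨u, huS, hud⟩ := hS (i, j)
      have hreach : G.Reachable u (i, j) :=
        strongProd_preconnected cycleGraph_preconnected cycleGraph_preconnected u (i, j)
      have h1 : (cycleGraph (m' + 3)).dist u.1 i ≤ d := dist_proj1 hreach hud
      have h2 : (cycleGraph (n' + 3)).dist u.2 j ≤ d := dist_proj2 hreach hud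
      exact Finset.mem_biUnion.mpr ⟨u, Finset.mem_filter.mpr ⟨huS, h2⟩,
        Finset.mem_filter.mpr ⟨Finset.mem_univ _, h1⟩⟩
    have hm3 : m' + 3 ≤ (2 * d + 1) * T.card := by
      calc m' + 3 = (Finset.univ : Finset (Fin (m' + 3))).card := by simp
        _ ≤ (T.biUnion (fun u => Finset.univ.filter fun i =>
              (cycleGraph (m' + 3)).dist u.1 i ≤ d)).card := Finset.card_le_card hcover
        _ ≤ ∑ u ∈ T, (Finset.univ.filter fun i =>
              (cycleGraph (m' + 3)).dist u.1 i ≤ d).card := Finset.card_biUnion_le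
        _ ≤ ∑ _u ∈ T, (2 * d + 1) := Finset.sum_le_sum fun u _ => ball_card m' d u.1
        _ = (2 * d + 1) * T.card := by rw [Finset.sum_const, smul_eq_mul, mul_comm]
    have h2 : (m' + 3 + 2 * d) / (2 * d + 1) ≤ (2 * d + (2 * d + 1) * T.card) / (2 * d + 1) :=
      Nat.div_le_div_right (by omega)
    rwa [Nat.add_mul_div_left _ _ (by omega : 0 < 2 * d + 1),
      Nat.div_eq_of_lt (show 2 * d < 2 * d + 1 by omega), zero_add] at h2
  calc (n' + 3) * ((m' + 3 + 2 * d) / (2 * d + 1))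
      = ∑ _j : Fin (n' + 3), (m' + 3 + 2 * d) / (2 * d + 1) := by
        rw [Finset.sum_const, smul_eq_mul, Finset.card_univ, Fintype.card_fin]
    _ ≤ ∑ j : Fin (n' + 3), (S.filter fun u => (cycleGraph (n' + 3)).dist u.2 j ≤ d).card :=
        Finset.sum_le_sum fun j _ => hrow j
    _ = ∑ j : Fin (n' + 3), ∑ u ∈ S, if (cycleGraph (n' + 3)).dist u.2 j ≤ d then 1 else 0 :=
        Finset.sum_congr rfl fun j _ => Finset.card_filter _ _
    _ = ∑ u ∈ S, ∑ j : Fin (n' + 3), if (cycleGraph (n' + 3)).dist u.2 j ≤ d then 1 else 0 :=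
        Finset.sum_comm
    _ = ∑ u ∈ S, (Finset.univ.filter fun j => (cycleGraph (n' + 3)).dist u.2 j ≤ d).card :=
        Finset.sum_congr rfl fun u _ => (Finset.card_filter _ _).symm
    _ ≤ ∑ _u ∈ S, (2 * d + 1) := Finset.sum_le_sum fun u _ => ball_card n' d u.2
    _ = (2 * d + 1) * S.card := by rw [Finset.sum_const, smul_eq_mul, mul_comm]

theorem gamma_torus_lower (d p : ℕ) (m n : ℕ) (hm : 3 ≤ m) (hn : 3 ≤ n) :
    ((n * ((m + 2 * d) / (2 * d + 1)) : ℕ) : ℕ∞) ≤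
      ((2 * d + 1 : ℕ) : ℕ∞) *
        distPackDomNum (strongProd (cycleGraph m) (cycleGraph n)) d p := by
  classical
  obtain ⟨m', rfl⟩ : ∃ k, m = k + 3 := ⟨m - 3, by omega⟩
  obtain ⟨n', rfl⟩ : ∃ k, n = k + 3 := ⟨n - 3, by omega⟩
  rw [distPackDomNum]
  set A := {x : ℕ∞ | ∃ S : Finset (Fin (m' + 3) × Fin (n' + 3)), x = S.card ∧
    IsDistDomSet (strongProd (cycleGraph (m' + 3)) (cycleGraph (n' + 3))) d S ∧
    IsPacking (strongProd (cycleGraph (m' + 3)) (cycleGraph (n' + 3))) p S} with hA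
  rcases Set.eq_empty_or_nonempty A with hAe | hAne
  · rw [hAe, sInf_empty, ENat.mul_top (by exact_mod_cast Nat.succ_ne_zero (2 * d))]
    exact le_top
  · obtain ⟨a, haA, hamin⟩ := (wellFounded_lt (α := ℕ∞)).has_min A hAne
    have hsinf : sInf A = a :=
      le_antisymm (sInf_le haA) (le_sInf fun b hb => not_lt.mp (hamin b hb))
    rw [hsinf]
    obtain ⟨S, rfl, hdom, -⟩ := haA
    have := key_count S hdom
    exact_mod_cast this
end

section
/- For all nonnegative integers d and p and all integers m ≥ 3 and n ≥ 3 with n ≡ 0 (mod 2d+1), it holds that γ_d^p(C_m ⊠ C_n) = γ_d^p(C_m) · γ_d^p(C_n) (in ℕ ∪ {∞}). -/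
open SimpleGraph

namespace GammaAux
open Finset
open scoped Fin.CommRing Fin.NatCast Fin.IntCast


/-- cyclic distance on `Fin r` -/
def cdist {r : ℕ} (x y : Fin r) : ℕ := min (x - y).val (y - x).val

lemma fin_sub_val {r : ℕ} (x y : Fin r) :
    (x - y).val = if y.val ≤ x.val then x.val - y.val else r + x.val - y.val := by
  have hx := x.isLt; have hy := y.isLt
  rw [Fin.sub_def]
  dsimp only
  split_ifs with h
  · have h1 : r - y.val + x.val = r + (x.val - y.val) := by omega
    rw [h1, Nat.add_mod_left, Nat.mod_eq_of_lt (by omega)]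
  · rw [Nat.mod_eq_of_lt (by omega)]; omega

lemma cdist_comm {r : ℕ} (x y : Fin r) : cdist x y = cdist y x := by
  unfold cdist; omega

lemma cdist_self {r : ℕ} (x : Fin r) : cdist x x = 0 := by
  unfold cdist; rw [fin_sub_val]; simp

lemma sub_val_add {r : ℕ} {x y : Fin r} (h : x ≠ y) :
    (x - y).val + (y - x).val = r := by
  have hx := x.isLt; have hy := y.isLt
  have hne : x.val ≠ y.val := fun hv => h (Fin.ext hv)
  rw [fin_sub_val, fin_sub_val]; split_ifs <;> omega

lemma cdist_val {r : ℕ} (x y : Fin r) : cdist x y = min ((y - x).val) (r - (y - x).val) := by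
  rcases eq_or_ne x y with rfl | h
  · rw [cdist_self]; rw [fin_sub_val]; simp
  · have := sub_val_add h
    unfold cdist; omega

lemma two_mul_cdist_le {r : ℕ} (x y : Fin r) : 2 * cdist x y ≤ r := by
  rcases eq_or_ne x y with rfl | h
  · rw [cdist_self]; omega
  · have := sub_val_add h; unfold cdist; omega

lemma cdist_eq_zero {r : ℕ} {x y : Fin r} (h : cdist x y = 0) : x = y := by
  have hx := x.isLt; have hy := y.isLt
  have h1 := fin_sub_val x y
  have h2 := fin_sub_val y x
  unfold cdist at h
  apply Fin.ext
  split_ifs at h1 h2 <;> omega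



lemma val_one' {r : ℕ} [NeZero r] (hr : 2 ≤ r) : (1 : Fin r).val = 1 := by
  rw [Fin.val_one']
  exact Nat.mod_eq_of_lt (by omega)

lemma cycle_connected_s14 {r : ℕ} (hr : 1 ≤ r) : (cycleGraph r).Connected := by
  obtain ⟨s, rfl⟩ : ∃ s, r = s + 1 := ⟨r - 1, by omega⟩
  exact cycleGraph_connected

lemma exists_walk_up {r : ℕ} (hr : 2 ≤ r) (x : Fin r) :
    ∀ (b : ℕ) (y : Fin r), (y - x).val = b → ∃ W : (cycleGraph r).Walk x y, W.length = b := by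
  haveI : NeZero r := ⟨by omega⟩
  intro b
  induction b with
  | zero =>
    intro y hy
    have : y = x := by
      have h1 := fin_sub_val y x
      have hx := x.isLt; have hy' := y.isLt
      apply Fin.ext
      split_ifs at h1 <;> omega
    subst this
    exact ⟨Walk.nil, rfl⟩
  | succ b ih =>
    intro y hy
    have h1 : (y - 1 - x).val = b := by
      have e1 : y - 1 - x = (y - x) - 1 := by ring
      have e2 := fin_sub_val (y - x) 1
      rw [val_one' hr] at e2
      have := (y - x).isLt
      rw [e1, e2]
      split_ifs at * <;> omega
    obtain ⟨W, hW⟩ := ih (y - 1) h1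
    have adj : (cycleGraph r).Adj (y - 1) y := by
      rw [cycleGraph_adj']
      right
      have : y - (y - 1) = 1 := by ring
      rw [this, val_one' hr]
    exact ⟨W.concat adj, by rw [Walk.length_concat, hW]⟩

lemma cdist_lipschitz {r : ℕ} (hr : 2 ≤ r) {x u v : Fin r} (h : (cycleGraph r).Adj u v) :
    cdist x v ≤ cdist x u + 1 := by
  haveI : NeZero r := ⟨by omega⟩
  rw [cdist_val, cdist_val]
  rw [cycleGraph_adj'] at h
  have ha := (u - x).isLt
  have hb := (v - x).isLt
  rcases h with h | h
  · -- (u - v).val = 1, so u - x = (v - x) + 1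
    have key : u - x = (v - x) + 1 := by
      have : u - v = 1 := Fin.ext (by rw [h, val_one' hr])
      have h2 : u - x = (u - v) + (v - x) := by ring
      rw [this] at h2; rw [h2]; ring
    have hval : (u - x).val = ((v - x).val + 1) % r := by
      rw [key, Fin.add_def, val_one' hr]
    rcases Nat.lt_or_ge ((v - x).val + 1) r with hlt | hge
    · rw [Nat.mod_eq_of_lt hlt] at hval; omega
    · have : (v - x).val = r - 1 := by omega
      have : (u - x).val = 0 := by rw [hval, this]; simp [Nat.sub_add_cancel (by omega : 1 ≤ r)]
      omega
  · -- (v - u).val = 1, v - x = (u - x) + 1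
    have key : v - x = (u - x) + 1 := by
      have : v - u = 1 := Fin.ext (by rw [h, val_one' hr])
      have h2 : v - x = (v - u) + (u - x) := by ring
      rw [this] at h2; rw [h2]; ring
    have hval : (v - x).val = ((u - x).val + 1) % r := by
      rw [key, Fin.add_def, val_one' hr]
    rcases Nat.lt_or_ge ((u - x).val + 1) r with hlt | hge
    · rw [Nat.mod_eq_of_lt hlt] at hval; omega
    · have h3 : (u - x).val = r - 1 := by omega
      have : (v - x).val = 0 := by rw [hval, h3]; simp [Nat.sub_add_cancel (by omega : 1 ≤ r)]
      omega

lemma cdist_le_walk {r : ℕ} (hr : 2 ≤ r) (x : Fin r) :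
    ∀ {u v : Fin r} (W : (cycleGraph r).Walk u v), cdist x v ≤ cdist x u + W.length := by
  intro u v W
  induction W with
  | nil => simp
  | cons h W ih =>
    rename_i a b c
    calc cdist x c ≤ cdist x b + W.length := ih
      _ ≤ (cdist x a + 1) + W.length := by
          have := cdist_lipschitz hr (x := x) h; omega
      _ = cdist x a + (Walk.cons h W).length := by rw [Walk.length_cons]; ring

theorem cycle_dist_eq {r : ℕ} (hr : 2 ≤ r) (x y : Fin r) :
    (cycleGraph r).dist x y = cdist x y := by
  apply le_antisymm
  · obtain ⟨W, hW⟩ := exists_walk_up hr x (y - x).val y rfl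
    obtain ⟨W', hW'⟩ := exists_walk_up hr y (x - y).val x rfl
    have h1 : (cycleGraph r).dist x y ≤ (y - x).val := hW ▸ SimpleGraph.dist_le W
    have h2 : (cycleGraph r).dist x y ≤ (x - y).val := by
      rw [SimpleGraph.dist_comm]
      exact hW' ▸ SimpleGraph.dist_le W'
    unfold cdist; omega
  · obtain ⟨W, hW⟩ := ((cycle_connected_s14 (by omega : 1 ≤ r)) x y).exists_walk_length_eq_dist
    have := cdist_le_walk hr x W
    rw [cdist_self] at this
    omega



lemma cdist_def {r : ℕ} (x y : Fin r) : cdist x y = min (x - y).val (y - x).val := rfl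

lemma val_natCast' {r : ℕ} [NeZero r] (e : ℕ) (he : e < r) : ((e : Fin r)).val = e := by
  rw [Fin.val_natCast]; exact Nat.mod_eq_of_lt he

lemma ball_card_le {r : ℕ} [NeZero r] (d : ℕ) (a : Fin r) :
    (univ.filter fun x : Fin r => cdist a x ≤ d).card ≤ 2 * d + 1 := by
  have hr : 1 ≤ r := Nat.pos_of_ne_zero (NeZero.ne r)
  have hsub : (univ.filter fun x : Fin r => cdist a x ≤ d) ⊆
      insert a (((Icc 1 d).image (fun e : ℕ => a + (e : Fin r))) ∪
        ((Icc 1 d).image (fun e : ℕ => a - (e : Fin r)))) := by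
    intro x hx
    rw [mem_filter] at hx
    obtain ⟨-, hx⟩ := hx
    rw [cdist_val] at hx
    set c := (x - a).val with hc
    have hclt : c < r := (x - a).isLt
    have hxa : x = a + ((c : ℕ) : Fin r) := by
      rw [hc, Fin.cast_val_eq_self]; ring
    rcases Nat.eq_zero_or_pos c with h0 | hpos
    · rw [h0] at hxa; simp at hxa; rw [mem_insert]; left; rw [hxa]
    · rcases le_or_gt c d with hcd | hcd
      · rw [mem_insert]; right; rw [mem_union]; left
        rw [mem_image]
        exact ⟨c, by rw [mem_Icc]; omega, hxa.symm⟩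
      · have hrc : r - c ≤ d := by omega
        rw [mem_insert]; right; rw [mem_union]; right
        rw [mem_image]
        refine ⟨r - c, by rw [mem_Icc]; omega, ?_⟩
        have hcast : ((r - c : ℕ) : Fin r) = - ((c : ℕ) : Fin r) := by
          rw [Nat.cast_sub (by omega), Fin.natCast_self]; ring
        rw [hcast, hxa]; ring
  have h0 := Finset.card_le_card hsub
  have h1 := Finset.card_insert_le a (((Icc 1 d).image (fun e : ℕ => a + (e : Fin r))) ∪
        ((Icc 1 d).image (fun e : ℕ => a - (e : Fin r))))
  have h2 := Finset.card_union_le ((Icc 1 d).image (fun e : ℕ => a + (e : Fin r)))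
          ((Icc 1 d).image (fun e : ℕ => a - (e : Fin r)))
  have h3 := Finset.card_image_le (s := Icc 1 d) (f := fun e : ℕ => a + (e : Fin r))
  have h4 := Finset.card_image_le (s := Icc 1 d) (f := fun e : ℕ => a - (e : Fin r))
  rw [Nat.card_Icc] at h3 h4
  omega

lemma ball_card_eq {r d : ℕ} (hr : 2 * d + 1 ≤ r) (y : Fin r) :
    (univ.filter fun b : Fin r => cdist y b ≤ d).card = 2 * d + 1 := by
  haveI : NeZero r := ⟨by omega⟩
  have hset : (univ.filter fun b : Fin r => cdist y b ≤ d) =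
      (range (2 * d + 1)).image (fun e : ℕ => y + (e : Fin r) - (d : Fin r)) := by
    ext x
    rw [mem_filter, mem_image]
    constructor
    · rintro ⟨-, hx⟩
      rw [cdist_val] at hx
      set c := (x - y).val with hc
      have hclt : c < r := (x - y).isLt
      have hxa : x = y + ((c : ℕ) : Fin r) := by rw [hc, Fin.cast_val_eq_self]; ring
      rcases le_or_gt c d with hcd | hcd
      · refine ⟨d + c, by rw [mem_range]; omega, ?_⟩
        rw [Nat.cast_add, hxa]; ring
      · have hrc : r - c ≤ d := by omega
        refine ⟨d - (r - c), by rw [mem_range]; omega, ?_⟩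
        have h1 : ((d - (r - c) : ℕ) : Fin r) = (d : Fin r) - ((r - c : ℕ) : Fin r) := by
          rw [← Nat.cast_sub (by omega : r - c ≤ d)]
        have h2 : ((r - c : ℕ) : Fin r) = - ((c : ℕ) : Fin r) := by
          rw [Nat.cast_sub (by omega), Fin.natCast_self]; ring
        rw [h1, h2, hxa]; ring
    · rintro ⟨e, he, rfl⟩
      rw [mem_range] at he
      refine ⟨mem_univ _, ?_⟩
      rw [cdist_val]
      have hkey : (y + (e : Fin r) - (d : Fin r) - y) = (e : Fin r) - (d : Fin r) := by ring
      have ve : ((e : Fin r)).val = e := val_natCast' e (by omega)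
      have vd : ((d : Fin r)).val = d := val_natCast' d (by omega)
      rw [hkey, fin_sub_val, ve, vd]
      split_ifs <;> omega
  rw [hset, Finset.card_image_of_injOn, Finset.card_range]
  intro e he e' he' hee
  rw [Finset.coe_range, Set.mem_Iio] at he he'
  simp only at hee
  have hcast : (e : Fin r) = (e' : Fin r) := by linear_combination hee
  have := congrArg Fin.val hcast
  rw [val_natCast' e (by omega), val_natCast' e' (by omega)] at this
  exact this

lemma pack_card {r q' : ℕ} [NeZero r] (hq : q' ≤ r) (A : Finset (Fin r))
    (hA : ∀ x ∈ A, ∀ y ∈ A, x ≠ y → q' ≤ cdist x y) : A.card * q' ≤ r := by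
  have hr : 1 ≤ r := Nat.pos_of_ne_zero (NeZero.ne r)
  have hinj : Set.InjOn (fun z : Fin r × ℕ => z.1 + (z.2 : Fin r)) ↑(A ×ˢ range q') := by
    rintro ⟨a, e⟩ h1 ⟨a', e'⟩ h2 heq
    simp only [Finset.coe_product, Set.mem_prod, Finset.mem_coe, mem_range] at h1 h2
    simp only at heq
    have ve : ((e : Fin r)).val = e := val_natCast' e (by omega)
    have ve' : ((e' : Fin r)).val = e' := val_natCast' e' (by omega)
    have haa : a = a' := by
      by_contra hne
      have hq' := hA a h1.1 a' h2.1 hne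
      rw [cdist_def] at hq'
      have hsub : a' - a = (e : Fin r) - (e' : Fin r) := by linear_combination - heq
      have hsub2 : a - a' = (e' : Fin r) - (e : Fin r) := by linear_combination heq
      have hv1 : (a' - a).val = if ((e' : Fin r)).val ≤ ((e : Fin r)).val
          then ((e : Fin r)).val - ((e' : Fin r)).val
          else r + ((e : Fin r)).val - ((e' : Fin r)).val := by rw [hsub, fin_sub_val]
      have hv2 : (a - a').val = if ((e : Fin r)).val ≤ ((e' : Fin r)).val
          then ((e' : Fin r)).val - ((e : Fin r)).val
          else r + ((e' : Fin r)).val - ((e : Fin r)).val := by rw [hsub2, fin_sub_val]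
      rw [ve, ve'] at hv1 hv2
      split_ifs at hv1 hv2 <;> omega
    subst haa
    have hcast : (e : Fin r) = (e' : Fin r) := by linear_combination heq
    have := congrArg Fin.val hcast
    rw [ve, ve'] at this
    rw [this]
  calc A.card * q' = (A ×ˢ range q').card := by rw [Finset.card_product, Finset.card_range]
    _ = ((A ×ˢ range q').image (fun z : Fin r × ℕ => z.1 + (z.2 : Fin r))).card :=
        (Finset.card_image_of_injOn hinj).symm
    _ ≤ (univ : Finset (Fin r)).card := Finset.card_le_card (Finset.subset_univ _)
    _ = r := by rw [Finset.card_univ, Fintype.card_fin]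

lemma dom_card {r d : ℕ} [NeZero r] (S : Finset (Fin r))
    (hS : ∀ v : Fin r, ∃ u ∈ S, cdist u v ≤ d) : r ≤ S.card * (2 * d + 1) := by
  have hsub : (univ : Finset (Fin r)) ⊆ S.biUnion (fun u => univ.filter fun v => cdist u v ≤ d) := by
    intro v _
    rw [Finset.mem_biUnion]
    obtain ⟨u, hu, hd⟩ := hS v
    exact ⟨u, hu, by rw [mem_filter]; exact ⟨mem_univ _, hd⟩⟩
  calc r = (univ : Finset (Fin r)).card := by rw [Finset.card_univ, Fintype.card_fin]
    _ ≤ (S.biUnion (fun u => univ.filter fun v => cdist u v ≤ d)).card := Finset.card_le_card hsub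
    _ ≤ ∑ u ∈ S, (univ.filter fun v => cdist u v ≤ d).card := Finset.card_biUnion_le
    _ ≤ ∑ _u ∈ S, (2 * d + 1) := Finset.sum_le_sum (fun u _ => ball_card_le d u)
    _ = S.card * (2 * d + 1) := by rw [Finset.sum_const, smul_eq_mul]

lemma count_window {n w : ℕ} [NeZero n] (hw : w ≤ n) (y : Fin n) :
    (univ.filter fun b : Fin n => (y - b).val < w).card = w := by
  have hn : 1 ≤ n := Nat.pos_of_ne_zero (NeZero.ne n)
  have hset : (univ.filter fun b : Fin n => (y - b).val < w) =
      (range w).image (fun e : ℕ => y - (e : Fin n)) := by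
    ext b
    rw [mem_filter, mem_image]
    constructor
    · rintro ⟨-, hb⟩
      refine ⟨(y - b).val, by rw [mem_range]; exact hb, ?_⟩
      rw [Fin.cast_val_eq_self]; ring
    · rintro ⟨e, he, rfl⟩
      rw [mem_range] at he
      refine ⟨mem_univ _, ?_⟩
      have hkey : y - (y - (e : Fin n)) = (e : Fin n) := by ring
      rw [hkey, val_natCast' e (by omega)]
      exact he
  rw [hset, Finset.card_image_of_injOn, Finset.card_range]
  intro e he e' he' hee
  rw [Finset.coe_range, Set.mem_Iio] at he he'
  simp only at hee
  have hcast : (e : Fin n) = (e' : Fin n) := by linear_combination - hee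
  have := congrArg Fin.val hcast
  rw [val_natCast' e (by omega), val_natCast' e' (by omega)] at this
  exact this

lemma window_close {n w : ℕ} (hw : w ≤ n) {y y' b : Fin n}
    (h1 : (y - b).val < w) (h2 : (y' - b).val < w) : cdist y y' < w := by
  haveI : NeZero n := ⟨by have := y.pos; omega⟩
  have key1 : y - y' = (y - b) - (y' - b) := by ring
  have key2 : y' - y = (y' - b) - (y - b) := by ring
  have hv1 := fin_sub_val (y - b) (y' - b)
  have hv2 := fin_sub_val (y' - b) (y - b)
  have l1 := (y - b).isLt
  have l2 := (y' - b).isLt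
  rw [cdist_def, key1, key2]
  split_ifs at hv1 hv2 <;> omega

lemma double_count {σ τ : Type*} [Fintype τ] [DecidableEq σ] (S : Finset σ) (P : σ → τ → Prop)
    [∀ s b, Decidable (P s b)] (c : ℕ) (hc : ∀ s ∈ S, (univ.filter fun b => P s b).card = c) :
    ∑ b : τ, (S.filter fun s => P s b).card = S.card * c := by
  have h1 : ∀ b : τ, (S.filter fun s => P s b).card = ∑ s ∈ S, if P s b then 1 else 0 :=
    fun b => Finset.card_filter _ _
  calc ∑ b : τ, (S.filter fun s => P s b).card
      = ∑ b : τ, ∑ s ∈ S, if P s b then 1 else 0 := Finset.sum_congr rfl (fun b _ => h1 b)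
    _ = ∑ s ∈ S, ∑ b : τ, if P s b then 1 else 0 := Finset.sum_comm
    _ = ∑ s ∈ S, (univ.filter fun b => P s b).card :=
        Finset.sum_congr rfl (fun s _ => (Finset.card_filter _ _).symm)
    _ = ∑ _s ∈ S, c := Finset.sum_congr rfl hc
    _ = S.card * c := by rw [Finset.sum_const, smul_eq_mul]



variable {α β : Type*} {G : SimpleGraph α} {H : SimpleGraph β}

def homFst (G : SimpleGraph α) (H : SimpleGraph β) (h : β) : G →g strongProd G H :=
  ⟨fun g => (g, h), fun a => Or.inl ⟨a, rfl⟩⟩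

def homSnd (G : SimpleGraph α) (H : SimpleGraph β) (g : α) : H →g strongProd G H :=
  ⟨fun h => (g, h), fun a => Or.inr (Or.inl ⟨rfl, a⟩)⟩

lemma exists_walk_prod : ∀ {g g' : α} {h h' : β} (W1 : G.Walk g g') (W2 : H.Walk h h'),
    ∃ W : (strongProd G H).Walk (g, h) (g', h'), W.length ≤ max W1.length W2.length := by
  intro g g' h h' W1
  induction W1 generalizing h with
  | nil =>
    intro W2
    refine ⟨(W2.map (homSnd G H _)).copy rfl rfl, ?_⟩
    exact (Walk.length_copy _ _ _).trans_le ((Walk.length_map _ _).trans_le (le_max_right _ _))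
  | @cons a b c adj W1' ih =>
    intro W2
    cases W2 with
    | nil =>
      refine ⟨((Walk.cons adj W1').map (homFst G H _)).copy rfl rfl, ?_⟩
      exact (Walk.length_copy _ _ _).trans_le ((Walk.length_map _ _).trans_le (le_max_left _ _))
    | @cons hh hh1 hh' adj2 W2' =>
      obtain ⟨W, hW⟩ := ih W2'
      refine ⟨Walk.cons (Or.inr (Or.inr ⟨adj, adj2⟩)) W, ?_⟩
      show W.length + 1 ≤ max (W1'.length + 1) (W2'.length + 1)
      rcases le_max_iff.mp hW with h' | h'
      · have : W.length + 1 ≤ W1'.length + 1 := by omega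
        exact le_max_of_le_left this
      · have : W.length + 1 ≤ W2'.length + 1 := by omega
        exact le_max_of_le_right this

lemma prod_reachable (hG : G.Connected) (hH : H.Connected) (u v : α × β) :
    (strongProd G H).Reachable u v := by
  obtain ⟨W1⟩ := hG u.1 v.1
  obtain ⟨W2⟩ := hH u.2 v.2
  obtain ⟨W, -⟩ := exists_walk_prod W1 W2
  exact ⟨by convert W⟩

lemma dist_prod_le (hG : G.Connected) (hH : H.Connected) (u v : α × β) :
    (strongProd G H).dist u v ≤ max (G.dist u.1 v.1) (H.dist u.2 v.2) := by
  obtain ⟨u1, u2⟩ := u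
  obtain ⟨v1, v2⟩ := v
  obtain ⟨W1, hW1⟩ := (hG u1 v1).exists_walk_length_eq_dist
  obtain ⟨W2, hW2⟩ := (hH u2 v2).exists_walk_length_eq_dist
  obtain ⟨W, hW⟩ := exists_walk_prod W1 W2
  have h1 : (strongProd G H).dist (u1, u2) (v1, v2) ≤ W.length := SimpleGraph.dist_le W
  simp only at h1 hW ⊢
  omega

lemma dist_fst_walk (hG : G.Connected) :
    ∀ {u v : α × β} (W : (strongProd G H).Walk u v), G.dist u.1 v.1 ≤ W.length := by
  intro u v W
  induction W with
  | nil => simp [SimpleGraph.dist_self]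
  | @cons a b c adj W ih =>
    rw [Walk.length_cons]
    have hstep : G.dist a.1 b.1 ≤ 1 := by
      rcases adj with ⟨h1, -⟩ | ⟨h1, -⟩ | ⟨h1, -⟩
      · have := SimpleGraph.dist_le (Walk.cons h1 Walk.nil)
        simpa using this
      · rw [h1, SimpleGraph.dist_self]; omega
      · have := SimpleGraph.dist_le (Walk.cons h1 Walk.nil)
        simpa using this
    have := hG.dist_triangle (u := a.1) (v := b.1) (w := c.1)
    omega

lemma dist_snd_walk (hH : H.Connected) :
    ∀ {u v : α × β} (W : (strongProd G H).Walk u v), H.dist u.2 v.2 ≤ W.length := by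
  intro u v W
  induction W with
  | nil => simp [SimpleGraph.dist_self]
  | @cons a b c adj W ih =>
    rw [Walk.length_cons]
    have hstep : H.dist a.2 b.2 ≤ 1 := by
      rcases adj with ⟨-, h1⟩ | ⟨-, h1⟩ | ⟨-, h1⟩
      · rw [h1, SimpleGraph.dist_self]; omega
      · have := SimpleGraph.dist_le (Walk.cons h1 Walk.nil)
        simpa using this
      · have := SimpleGraph.dist_le (Walk.cons h1 Walk.nil)
        simpa using this
    have := hH.dist_triangle (u := a.2) (v := b.2) (w := c.2)
    omega

lemma dist_fst_le (hG : G.Connected) (hH : H.Connected) (u v : α × β) :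
    G.dist u.1 v.1 ≤ (strongProd G H).dist u v := by
  obtain ⟨W, hW⟩ := (prod_reachable hG hH u v).exists_walk_length_eq_dist
  have := dist_fst_walk (H := H) hG W
  omega

lemma dist_snd_le (hG : G.Connected) (hH : H.Connected) (u v : α × β) :
    H.dist u.2 v.2 ≤ (strongProd G H).dist u v := by
  obtain ⟨W, hW⟩ := (prod_reachable hG hH u v).exists_walk_length_eq_dist
  have := dist_snd_walk (G := G) hH W
  omega


-- ============ Stage 5: cycle-level lemmas ============

lemma dom_iff {r d : ℕ} (hr : 2 ≤ r) {S : Finset (Fin r)} :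
    IsDistDomSet (cycleGraph r) d S ↔ ∀ v, ∃ u ∈ S, cdist u v ≤ d := by
  simp only [IsDistDomSet, cycle_dist_eq hr]

lemma pack_iff {r p : ℕ} (hr : 2 ≤ r) {S : Finset (Fin r)} :
    IsPacking (cycleGraph r) p S ↔ ∀ x ∈ S, ∀ y ∈ S, x ≠ y → p + 1 ≤ cdist x y := by
  simp only [IsPacking, cycle_dist_eq hr]

/-- domination lower bound for cycles -/
lemma cycle_dom_lb {r d : ℕ} (hr : 2 ≤ r) {S : Finset (Fin r)}
    (hS : IsDistDomSet (cycleGraph r) d S) : r ≤ S.card * (2 * d + 1) := by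
  haveI : NeZero r := ⟨by omega⟩
  exact dom_card S ((dom_iff hr).mp hS)

/-- packing upper bound for cycles, given at least two elements -/
lemma cycle_pack_ub {r p : ℕ} (hr : 2 ≤ r) {S : Finset (Fin r)}
    (hS : IsPacking (cycleGraph r) p S) (h2 : 2 ≤ S.card) : S.card * (p + 1) ≤ r := by
  haveI : NeZero r := ⟨by omega⟩
  rw [pack_iff hr] at hS
  obtain ⟨x, hx, y, hy, hxy⟩ := Finset.one_lt_card.mp h2
  have hq := hS x hx y hy hxy
  have h2c := two_mul_cdist_le x y
  exact pack_card (by omega) S hS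

/-- the singleton construction when `r ≤ 2d+1` -/
lemma cycle_exists_singleton {r d p : ℕ} (hr : 2 ≤ r) (hrk : r ≤ 2 * d + 1) :
    ∃ S : Finset (Fin r), (IsDistDomSet (cycleGraph r) d S ∧ IsPacking (cycleGraph r) p S)
      ∧ S.card = 1 := by
  haveI : NeZero r := ⟨by omega⟩
  refine ⟨{(0 : Fin r)}, ⟨?_, ?_⟩, Finset.card_singleton _⟩
  · rw [dom_iff hr]
    intro v
    refine ⟨0, Finset.mem_singleton_self _, ?_⟩
    have := two_mul_cdist_le (0 : Fin r) v
    omega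
  · rw [pack_iff hr]
    intro x hx y hy hxy
    rw [Finset.mem_singleton] at hx hy
    exact absurd (hx.trans hy.symm) hxy

/-- the balanced construction -/
lemma cycle_exists_A {r d p c0 : ℕ} (hr : 2 ≤ r) (hc0 : 1 ≤ c0)
    (hchar2 : r ≤ c0 * (2 * d + 1)) (hfe : c0 * (p + 1) ≤ r) :
    ∃ S : Finset (Fin r), (IsDistDomSet (cycleGraph r) d S ∧ IsPacking (cycleGraph r) p S)
      ∧ S.card = c0 := by
  haveI : NeZero r := ⟨by omega⟩
  set k := 2 * d + 1 with hk
  set q := p + 1 with hq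
  have hqk : q ≤ k := Nat.le_of_mul_le_mul_left (le_trans hfe hchar2) (by omega)
  set x : ℕ → ℕ := fun i => min (i * k) (r - (c0 - i) * q) with hx
  have hqr : q ≤ r := by
    have : 1 * q ≤ c0 * q := Nat.mul_le_mul_right q hc0
    omega
  have hx0 : x 0 = 0 := by simp [hx]
  have hcoq : ∀ i, i ≤ c0 → (c0 - i) * q ≤ r :=
    fun i hi => le_trans (Nat.mul_le_mul_right q (by omega)) hfe
  have hgap_lb : ∀ i, i + 1 ≤ c0 → x i + q ≤ x (i + 1) := by
    intro i hi
    have e1 : (i + 1) * k = i * k + k := by ring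
    have e2 : (c0 - i) * q = (c0 - (i + 1)) * q + q := by
      have h' : c0 - i = (c0 - (i + 1)) + 1 := by omega
      rw [h', Nat.succ_mul]
    have e3 := hcoq i (by omega)
    have e4 := hcoq (i + 1) hi
    simp only [hx]
    omega
  have hgap_ub : ∀ i, i + 1 ≤ c0 → x (i + 1) ≤ x i + k := by
    intro i hi
    have e1 : (i + 1) * k = i * k + k := by ring
    have e2 : (c0 - i) * q = (c0 - (i + 1)) * q + q := by
      have h' : c0 - i = (c0 - (i + 1)) + 1 := by omega
      rw [h', Nat.succ_mul]
    have e3 := hcoq i (by omega)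
    have e4 := hcoq (i + 1) hi
    simp only [hx]
    omega
  have key : ∀ j, j < c0 → ∀ i, i ≤ j → (x i ≤ x j ∧ (i < j → x i + q ≤ x j)) := by
    intro j
    induction j with
    | zero => intro _ i hi; have : i = 0 := by omega
              subst this; exact ⟨le_refl _, by omega⟩
    | succ j ih =>
      intro hj i hi
      have hgl := hgap_lb j (by omega)
      rcases Nat.eq_or_lt_of_le hi with h' | h'
      · subst h'; exact ⟨le_refl _, by omega⟩
      · have hij : i ≤ j := by omega
        have := ih (by omega) i hij
        constructor
        · omega
        · intro _; omega
  have hub : ∀ j, j < c0 → x j + q ≤ r := by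
    intro j hj
    have h5 : 1 * q ≤ (c0 - j) * q := Nat.mul_le_mul_right q (by omega)
    have h6 := hcoq j (by omega)
    have : x j ≤ r - (c0 - j) * q := min_le_right _ _
    omega
  have hxlt : ∀ j, j < c0 → x j < r := by
    intro j hj
    have := hub j hj
    omega
  have hcover : r ≤ x (c0 - 1) + k := by
    have e1 : c0 - (c0 - 1) = 1 := by omega
    have e2 : (c0 - 1) * k + k = c0 * k := by
      have h' : c0 = (c0 - 1) + 1 := by omega
      nth_rewrite 2 [h']
      rw [Nat.succ_mul]
    simp only [hx, e1, one_mul]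
    omega
  set S : Finset (Fin r) := (Finset.range c0).image (fun i => ((x i : ℕ) : Fin r)) with hS
  have hvx : ∀ i, i < c0 → ((x i : ℕ) : Fin r).val = x i :=
    fun i hi => val_natCast' (x i) (hxlt i hi)
  have hcd : ∀ i j, i < c0 → j < c0 → i < j → q ≤ cdist ((x i : ℕ) : Fin r) ((x j : ℕ) : Fin r) := by
    intro i j hi hj hij
    have h1 := (key j hj i (by omega)).2 hij
    have h2 := hub j hj
    have h3 := hxlt i hi
    have h4 := hxlt j hj
    rw [cdist_def]
    rw [fin_sub_val, fin_sub_val, hvx i hi, hvx j hj]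
    split_ifs <;> omega
  have hcard : S.card = c0 := by
    rw [hS, Finset.card_image_of_injOn, Finset.card_range]
    intro i hi j hj heq
    rw [Finset.coe_range, Set.mem_Iio] at hi hj
    by_contra hne
    have := congrArg Fin.val heq
    rw [hvx i hi, hvx j hj] at this
    rcases Nat.lt_or_ge i j with h' | h'
    · have := (key j hj i (by omega)).2 h'; omega
    · have hji : j < i := by omega
      have := (key i hi j (by omega)).2 hji; omega
  refine ⟨S, ⟨?_, ?_⟩, hcard⟩
  · rw [dom_iff hr]
    intro v
    set a := v.val with ha
    have halt : a < r := v.isLt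
    set i0 := Nat.findGreatest (fun i => x i ≤ a) (c0 - 1) with hi0
    have hspec : x i0 ≤ a := Nat.findGreatest_spec (P := fun i => x i ≤ a) (Nat.zero_le _) (by show x 0 ≤ a; rw [hx0]; omega)
    have hi0le : i0 ≤ c0 - 1 := Nat.findGreatest_le (P := fun i => x i ≤ a) _
    have hmemS : ∀ i, i < c0 → ((x i : ℕ) : Fin r) ∈ S := by
      intro i hi
      rw [hS, Finset.mem_image]
      exact ⟨i, Finset.mem_range.mpr hi, rfl⟩
    have hnext : (i0 + 1 ≤ c0 - 1 ∧ a < x (i0 + 1)) ∨ r ≤ x i0 + k := by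
      by_cases hlt : i0 < c0 - 1
      · left
        refine ⟨by omega, ?_⟩
        have := Nat.findGreatest_is_greatest (P := fun i => x i ≤ a) (n := c0 - 1) (by omega : i0 < i0 + 1) (by omega : i0 + 1 ≤ c0 - 1)
        omega
      · right
        have : i0 = c0 - 1 := by omega
        rw [this]
        exact hcover
    have hgap : a < x i0 + k := by
      rcases hnext with ⟨h1, h2⟩ | h1
      · have := hgap_ub i0 (by omega)
        omega
      · omega
    rcases le_or_gt (a - x i0) d with hcase | hcase
    · refine ⟨((x i0 : ℕ) : Fin r), hmemS i0 (by omega), ?_⟩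
      rw [cdist_def, fin_sub_val, fin_sub_val, hvx i0 (by omega), ← ha]
      split_ifs <;> omega
    · rcases hnext with ⟨h1, h2⟩ | h1
      · refine ⟨((x (i0 + 1) : ℕ) : Fin r), hmemS (i0 + 1) (by omega), ?_⟩
        have hgub := hgap_ub i0 (by omega)
        rw [cdist_def, fin_sub_val, fin_sub_val, hvx (i0 + 1) (by omega), ← ha]
        split_ifs <;> omega
      · refine ⟨((x 0 : ℕ) : Fin r), hmemS 0 (by omega), ?_⟩
        rw [cdist_def, fin_sub_val, fin_sub_val, hvx 0 (by omega), hx0, ← ha]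
        split_ifs <;> omega
  · rw [pack_iff hr]
    intro X hX Y hY hXY
    rw [hS, Finset.mem_image] at hX hY
    obtain ⟨i, hi, rfl⟩ := hX
    obtain ⟨j, hj, rfl⟩ := hY
    rw [Finset.mem_range] at hi hj
    rcases Nat.lt_trichotomy i j with h' | h' | h'
    · exact hcd i j hi hj h'
    · subst h'; exact absurd rfl hXY
    · rw [cdist_comm]
      exact hcd j i hj hi h'

-- ============ Stage 6: torus lemmas ============

section Torus

variable {d p m n : ℕ}

lemma tdist_le (hm : 2 ≤ m) (hn : 2 ≤ n) (u v : Fin m × Fin n) :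
    (strongProd (cycleGraph m) (cycleGraph n)).dist u v ≤ max (cdist u.1 v.1) (cdist u.2 v.2) := by
  have := dist_prod_le (cycle_connected_s14 (by omega : 1 ≤ m)) (cycle_connected_s14 (by omega : 1 ≤ n)) u v
  rwa [cycle_dist_eq hm, cycle_dist_eq hn] at this

lemma tdist_fst (hm : 2 ≤ m) (hn : 2 ≤ n) (u v : Fin m × Fin n) :
    cdist u.1 v.1 ≤ (strongProd (cycleGraph m) (cycleGraph n)).dist u v := by
  have := dist_fst_le (cycle_connected_s14 (by omega : 1 ≤ m)) (cycle_connected_s14 (by omega : 1 ≤ n)) u v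
  rwa [cycle_dist_eq hm] at this

lemma tdist_snd (hm : 2 ≤ m) (hn : 2 ≤ n) (u v : Fin m × Fin n) :
    cdist u.2 v.2 ≤ (strongProd (cycleGraph m) (cycleGraph n)).dist u v := by
  have := dist_snd_le (cycle_connected_s14 (by omega : 1 ≤ m)) (cycle_connected_s14 (by omega : 1 ≤ n)) u v
  rwa [cycle_dist_eq hn] at this

/-- window counting lower bound for valid sets in the torus -/
lemma torus_lower {c0 : ℕ} (hm : 2 ≤ m) (hn : 2 ≤ n) (hkn : 2 * d + 1 ≤ n)
    (hchar1 : (c0 - 1) * (2 * d + 1) < m)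
    {S : Finset (Fin m × Fin n)}
    (hdom : IsDistDomSet (strongProd (cycleGraph m) (cycleGraph n)) d S) :
    n * c0 ≤ S.card * (2 * d + 1) := by
  haveI : NeZero m := ⟨by omega⟩
  haveI : NeZero n := ⟨by omega⟩
  have hsum : ∑ b : Fin n, (S.filter fun s => cdist s.2 b ≤ d).card = S.card * (2 * d + 1) :=
    double_count S (fun s b => cdist s.2 b ≤ d) (2 * d + 1) (fun s _ => ball_card_eq hkn s.2)
  have hlb : ∀ b : Fin n, c0 ≤ (S.filter fun s => cdist s.2 b ≤ d).card := by
    intro b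
    set F := S.filter fun s => cdist s.2 b ≤ d with hF
    set D := F.image Prod.fst with hD
    have hDdom : ∀ a : Fin m, ∃ u ∈ D, cdist u a ≤ d := by
      intro a
      obtain ⟨s, hsS, hsd⟩ := hdom (a, b)
      have h1 : cdist s.1 a ≤ d := le_trans (tdist_fst hm hn s (a, b)) hsd
      have h2 : cdist s.2 b ≤ d := le_trans (tdist_snd hm hn s (a, b)) hsd
      refine ⟨s.1, ?_, h1⟩
      rw [hD, Finset.mem_image]
      exact ⟨s, by rw [hF, Finset.mem_filter]; exact ⟨hsS, h2⟩, rfl⟩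
    have hmD : m ≤ D.card * (2 * d + 1) := dom_card D hDdom
    have hDF : D.card ≤ F.card := Finset.card_image_le
    by_contra hcon
    push_neg at hcon
    have hDle : D.card ≤ c0 - 1 := by omega
    have : D.card * (2 * d + 1) ≤ (c0 - 1) * (2 * d + 1) := Nat.mul_le_mul_right _ hDle
    omega
  calc n * c0 = ∑ _b : Fin n, c0 := by
        rw [Finset.sum_const, Finset.card_univ, Fintype.card_fin, smul_eq_mul]
    _ ≤ ∑ b : Fin n, (S.filter fun s => cdist s.2 b ≤ d).card := Finset.sum_le_sum (fun b _ => hlb b)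
    _ = S.card * (2 * d + 1) := hsum

/-- no valid torus set can exist when the `m`-cycle is infeasible -/
lemma torus_infeasible_m {c0 : ℕ} (hm : 2 ≤ m) (hn : 2 ≤ n) (hkn : 2 * d + 1 ≤ n)
    (hmk : 2 * d + 1 < m) (hinf : m < c0 * (p + 1))
    (hchar1 : (c0 - 1) * (2 * d + 1) < m) (hchar2 : m ≤ c0 * (2 * d + 1))
    {S : Finset (Fin m × Fin n)}
    (hdom : IsDistDomSet (strongProd (cycleGraph m) (cycleGraph n)) d S)
    (hpack : IsPacking (strongProd (cycleGraph m) (cycleGraph n)) p S) : False := by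
  haveI : NeZero m := ⟨by omega⟩
  haveI : NeZero n := ⟨by omega⟩
  set k := 2 * d + 1 with hk
  set q := p + 1 with hq
  set w := min q k with hw
  have hwn : w ≤ n := by omega
  have hc0 : 2 ≤ c0 := by
    rcases Nat.lt_or_ge c0 2 with h | h
    · interval_cases c0 <;> simp_all <;> omega
    · exact h
  -- window upper bound
  have hwb : ∀ b : Fin n, (S.filter fun s => (s.2 - b).val < w).card ≤ c0 - 1 := by
    intro b
    set W := S.filter fun s => (s.2 - b).val < w with hW
    have hsep : ∀ s ∈ W, ∀ s' ∈ W, s ≠ s' → q ≤ cdist s.1 s'.1 := by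
      intro s hs s' hs' hne
      rw [hW, Finset.mem_filter] at hs hs'
      have hdy : cdist s.2 s'.2 < w := window_close hwn hs.2 hs'.2
      have hdist := hpack s hs.1 s' hs'.1 hne
      have hmax := tdist_le hm hn s s'
      have : q ≤ max (cdist s.1 s'.1) (cdist s.2 s'.2) := by omega
      omega
    have hinjOn : Set.InjOn (Prod.fst : Fin m × Fin n → Fin m) ↑W := by
      intro s hs s' hs' heq
      by_contra hne
      have := hsep s hs s' hs' hne
      rw [heq, cdist_self] at this
      omega
    set X := W.image Prod.fst with hX
    have hXcard : X.card = W.card := Finset.card_image_of_injOn hinjOn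
    have hXpack : ∀ x ∈ X, ∀ y ∈ X, x ≠ y → q ≤ cdist x y := by
      intro x hx y hy hxy
      rw [hX, Finset.mem_image] at hx hy
      obtain ⟨s, hs, rfl⟩ := hx
      obtain ⟨s', hs', rfl⟩ := hy
      exact hsep s hs s' hs' (fun h => hxy (by rw [h]))
    rcases Nat.lt_or_ge X.card 2 with h2 | h2
    · omega
    · obtain ⟨a, ha, b', hb', hab⟩ := Finset.one_lt_card.mp h2
      have hq1 := hXpack a ha b' hb' hab
      have hq2 := two_mul_cdist_le a b'
      have hqm : q ≤ m := by omega
      have := pack_card hqm X hXpack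
      have hlt : X.card * q < c0 * q := by omega
      have : X.card < c0 := Nat.lt_of_mul_lt_mul_right hlt
      omega
  have hsumW : ∑ b : Fin n, (S.filter fun s => (s.2 - b).val < w).card = S.card * w :=
    double_count S (fun s b => (s.2 - b).val < w) w (fun s _ => count_window hwn s.2)
  have hupper : S.card * w ≤ n * (c0 - 1) := by
    rw [← hsumW]
    calc ∑ b : Fin n, (S.filter fun s => (s.2 - b).val < w).card
        ≤ ∑ _b : Fin n, (c0 - 1) := Finset.sum_le_sum (fun b _ => hwb b)
      _ = n * (c0 - 1) := by
          rw [Finset.sum_const, Finset.card_univ, Fintype.card_fin, smul_eq_mul]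
  have hlower : n * c0 ≤ S.card * k := torus_lower hm hn hkn hchar1 hdom
  -- combine
  have step1 : n * (c0 * w) ≤ (S.card * k) * w := by
    calc n * (c0 * w) = (n * c0) * w := by ring
      _ ≤ (S.card * k) * w := Nat.mul_le_mul_right w hlower
  have step2 : (S.card * k) * w = (S.card * w) * k := by ring
  have step3 : (S.card * w) * k ≤ (n * (c0 - 1)) * k := Nat.mul_le_mul_right k hupper
  have step4 : (n * (c0 - 1)) * k = n * ((c0 - 1) * k) := by ring
  have hfin : c0 * w ≤ (c0 - 1) * k :=
    Nat.le_of_mul_le_mul_left (by omega) (show 0 < n by omega)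
  rcases le_total q k with hqk | hqk
  · have hwq : w = q := min_eq_left hqk
    rw [hwq] at hfin
    omega
  · have hwq : w = k := min_eq_right hqk
    rw [hwq] at hfin
    have hsucc : ((c0 - 1) + 1) * k = (c0 - 1) * k + k := Nat.succ_mul _ _
    have hco : (c0 - 1) + 1 = c0 := by omega
    rw [hco] at hsucc
    omega

/-- no valid torus set can exist when the `n`-cycle is infeasible -/
lemma torus_infeasible_n (hm : 2 ≤ m) (hn : 2 ≤ n)
    (hmk : m ≤ 2 * d + 1) (hqk : 2 * d + 1 < p + 1) (htn2 : 2 * (2 * d + 1) ≤ n)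
    {S : Finset (Fin m × Fin n)}
    (hdom : IsDistDomSet (strongProd (cycleGraph m) (cycleGraph n)) d S)
    (hpack : IsPacking (strongProd (cycleGraph m) (cycleGraph n)) p S) : False := by
  haveI : NeZero m := ⟨by omega⟩
  haveI : NeZero n := ⟨by omega⟩
  set k := 2 * d + 1 with hk
  set q := p + 1 with hq
  have hlower : n * 1 ≤ S.card * k := torus_lower hm hn (by omega)
    (by
      have h0 : (1 - 1) * (2 * d + 1) = 0 := by norm_num
      omega) hdom
  have hS2 : 2 ≤ S.card := by
    by_contra hcon
    push_neg at hcon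
    have : S.card * k ≤ 1 * k := Nat.mul_le_mul_right _ (by omega)
    omega
  have hsep : ∀ s ∈ S, ∀ s' ∈ S, s ≠ s' → q ≤ cdist s.2 s'.2 := by
    intro s hs s' hs' hne
    have hdx := two_mul_cdist_le s.1 s'.1
    have hdist := hpack s hs s' hs' hne
    have hmax := tdist_le hm hn s s'
    omega
  have hinjOn : Set.InjOn (Prod.snd : Fin m × Fin n → Fin n) ↑S := by
    intro s hs s' hs' heq
    by_contra hne
    have := hsep s hs s' hs' hne
    rw [heq, cdist_self] at this
    omega
  set Y := S.image Prod.snd with hY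
  have hYcard : Y.card = S.card := Finset.card_image_of_injOn hinjOn
  have hYpack : ∀ x ∈ Y, ∀ y ∈ Y, x ≠ y → q ≤ cdist x y := by
    intro x hx y hy hxy
    rw [hY, Finset.mem_image] at hx hy
    obtain ⟨s, hs, rfl⟩ := hx
    obtain ⟨s', hs', rfl⟩ := hy
    exact hsep s hs s' hs' (fun h => hxy (by rw [h]))
  have hq2 : 2 ≤ Y.card := by omega
  obtain ⟨a, ha, b', hb', hab⟩ := Finset.one_lt_card.mp hq2
  have hqa := hYpack a ha b' hb' hab
  have hqb := two_mul_cdist_le a b'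
  have hqn : q ≤ n := by omega
  have hpb := pack_card hqn Y hYpack
  -- Y.card * q ≤ n ≤ S.card * k, Y.card = S.card ⇒ q ≤ k
  have h1 : S.card * q ≤ S.card * k := by
    rw [← hYcard] at hlower ⊢
    omega
  have := Nat.le_of_mul_le_mul_left (by
    calc S.card * q ≤ S.card * k := h1
    ) (show 0 < S.card by omega)
  omega

end Torus

-- ============ Stage 7: gamma plumbing ============


lemma pred_mul {a : ℕ} (b : ℕ) (ha : 1 ≤ a) : (a - 1) * b + b = a * b := by
  cases a with
  | zero => omega
  | succ a' => simp [Nat.succ_sub_one, Nat.succ_mul]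

lemma gamma_eq {V : Type*} [Fintype V] (G : SimpleGraph V) (d p v : ℕ)
    (hex : ∃ S : Finset V, (IsDistDomSet G d S ∧ IsPacking G p S) ∧ S.card = v)
    (hlb : ∀ S : Finset V, IsDistDomSet G d S → IsPacking G p S → v ≤ S.card) :
    distPackDomNum G d p = (v : ℕ∞) := by
  obtain ⟨S, hS, hcard⟩ := hex
  apply le_antisymm
  · exact sInf_le ⟨S, by rw [hcard], hS.1, hS.2⟩
  · apply le_sInf
    rintro x ⟨S', rfl, h1, h2⟩
    exact_mod_cast hlb S' h1 h2

lemma gamma_top {V : Type*} (G : SimpleGraph V) (d p : ℕ)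
    (hno : ∀ S : Finset V, IsDistDomSet G d S → IsPacking G p S → False) :
    distPackDomNum G d p = ⊤ := by
  unfold distPackDomNum
  have hempty : {n : ℕ∞ | ∃ S : Finset V, n = S.card ∧ IsDistDomSet G d S ∧ IsPacking G p S} = ∅ := by
    rw [Set.eq_empty_iff_forall_notMem]
    rintro x ⟨S, -, h1, h2⟩
    exact hno S h1 h2
  rw [hempty, sInf_empty]

lemma gamma_ne_zero {V : Type*} [Nonempty V] (G : SimpleGraph V) (d p : ℕ) :
    distPackDomNum G d p ≠ 0 := by
  have h1 : (1 : ℕ∞) ≤ distPackDomNum G d p := by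
    apply le_sInf
    rintro x ⟨S, rfl, h1, -⟩
    obtain ⟨u, hu, -⟩ := h1 (Classical.arbitrary V)
    have : 1 ≤ S.card := Finset.card_pos.mpr ⟨u, hu⟩
    exact_mod_cast this
  intro h0
  rw [h0] at h1
  exact absurd h1 (by norm_num)

end GammaAux

open GammaAux in
theorem gamma_torus_eq_of_dvd (d p : ℕ) (m n : ℕ) (hm : 3 ≤ m) (hn : 3 ≤ n)
    (hmod : n % (2 * d + 1) = 0) :
    distPackDomNum (strongProd (cycleGraph m) (cycleGraph n)) d p =
      distPackDomNum (cycleGraph m) d p * distPackDomNum (cycleGraph n) d p := by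
  have hm2 : 2 ≤ m := by omega
  have hn2 : 2 ≤ n := by omega
  haveI : Nonempty (Fin m) := ⟨⟨0, by omega⟩⟩
  haveI : Nonempty (Fin n) := ⟨⟨0, by omega⟩⟩
  obtain ⟨t, hnt⟩ : (2 * d + 1) ∣ n := Nat.dvd_of_mod_eq_zero hmod
  have hkpos : 0 < 2 * d + 1 := by omega
  have htpos : 1 ≤ t := by
    rcases Nat.eq_zero_or_pos t with rfl | h
    · omega
    · exact h
  have hntc : n = t * (2 * d + 1) := by rw [hnt]; ring
  have hkn : 2 * d + 1 ≤ n := by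
    have : 1 * (2 * d + 1) ≤ t * (2 * d + 1) := Nat.mul_le_mul_right _ htpos
    omega
  -- characterization of C0
  have hdm := Nat.div_add_mod (m + 2 * d) (2 * d + 1)
  have hmodlt : (m + 2 * d) % (2 * d + 1) < 2 * d + 1 := Nat.mod_lt _ hkpos
  have hc0pos : 1 ≤ (m + 2 * d) / (2 * d + 1) := by
    rw [Nat.one_le_div_iff hkpos]
    omega
  have hcomm : ((m + 2 * d) / (2 * d + 1)) * (2 * d + 1)
      = (2 * d + 1) * ((m + 2 * d) / (2 * d + 1)) := Nat.mul_comm _ _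
  have hchar2 : m ≤ ((m + 2 * d) / (2 * d + 1)) * (2 * d + 1) := by omega
  have hsucc : (((m + 2 * d) / (2 * d + 1)) - 1) * (2 * d + 1) + (2 * d + 1)
      = ((m + 2 * d) / (2 * d + 1)) * (2 * d + 1) := pred_mul _ hc0pos
  have hchar1 : (((m + 2 * d) / (2 * d + 1)) - 1) * (2 * d + 1) < m := by omega
  set C0 := (m + 2 * d) / (2 * d + 1) with hC0
  have hsucct : (t - 1) * (2 * d + 1) + (2 * d + 1) = t * (2 * d + 1) := pred_mul _ htpos
  by_cases hFm : m ≤ 2 * d + 1 ∨ C0 * (p + 1) ≤ m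
  · by_cases hFn : p + 1 ≤ 2 * d + 1 ∨ t = 1
    · -- both feasible: value C0 * t
      have hA : ∃ S : Finset (Fin m),
          (IsDistDomSet (cycleGraph m) d S ∧ IsPacking (cycleGraph m) p S) ∧ S.card = C0 := by
        rcases hFm with hmle | hfe
        · have hC01 : C0 = 1 := by
            by_contra hne
            have : 1 * (2 * d + 1) ≤ (C0 - 1) * (2 * d + 1) :=
              Nat.mul_le_mul_right _ (by omega)
            omega
          rw [hC01]
          exact cycle_exists_singleton hm2 (by omega)
        · exact cycle_exists_A hm2 hc0pos hchar2 hfe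
      have hB : ∃ S : Finset (Fin n),
          (IsDistDomSet (cycleGraph n) d S ∧ IsPacking (cycleGraph n) p S) ∧ S.card = t := by
        rcases hFn with hqle | ht1
        · refine cycle_exists_A (c0 := t) hn2 htpos (by omega) ?_
          have : t * (p + 1) ≤ t * (2 * d + 1) := Nat.mul_le_mul_left t hqle
          omega
        · rw [ht1]
          refine cycle_exists_singleton hn2 ?_
          rw [ht1] at hntc
          omega
      obtain ⟨A, ⟨hAdom, hApack⟩, hAcard⟩ := hA
      obtain ⟨B, ⟨hBdom, hBpack⟩, hBcard⟩ := hB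
      have hTval : distPackDomNum (strongProd (cycleGraph m) (cycleGraph n)) d p
          = ((C0 * t : ℕ) : ℕ∞) := by
        apply gamma_eq
        · refine ⟨A ×ˢ B, ⟨?_, ?_⟩, by rw [Finset.card_product, hAcard, hBcard]⟩
          · intro v
            obtain ⟨xa, hxa, hda⟩ := (dom_iff hm2).mp hAdom v.1
            obtain ⟨yb, hyb, hdb⟩ := (dom_iff hn2).mp hBdom v.2
            refine ⟨(xa, yb), Finset.mem_product.mpr ⟨hxa, hyb⟩, ?_⟩
            have := tdist_le hm2 hn2 (xa, yb) v
            simp only at this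
            omega
          · rintro ⟨xa, ya⟩ hxy ⟨xb, yb⟩ hxy' hne
            rw [Finset.mem_product] at hxy hxy'
            rcases ne_or_eq xa xb with hne1 | heq1
            · have hp1 := (pack_iff hm2).mp hApack xa hxy.1 xb hxy'.1 hne1
              have := tdist_fst hm2 hn2 (xa, ya) (xb, yb)
              simp only at this
              omega
            · subst heq1
              have hne2 : ya ≠ yb := by
                intro h; exact hne (by rw [h])
              have hp2 := (pack_iff hn2).mp hBpack ya hxy.2 yb hxy'.2 hne2
              have := tdist_snd hm2 hn2 (xa, ya) (xa, yb)
              simp only at this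
              omega
        · intro S h1 h2
          have hlow : n * C0 ≤ S.card * (2 * d + 1) := torus_lower hm2 hn2 hkn hchar1 h1
          have hrearr : (C0 * t) * (2 * d + 1) ≤ S.card * (2 * d + 1) := by
            calc (C0 * t) * (2 * d + 1) = (t * (2 * d + 1)) * C0 := by ring
              _ = n * C0 := by rw [← hntc]
              _ ≤ S.card * (2 * d + 1) := hlow
          exact Nat.le_of_mul_le_mul_right hrearr hkpos
      have hMval : distPackDomNum (cycleGraph m) d p = ((C0 : ℕ) : ℕ∞) := by
        apply gamma_eq
        · exact ⟨A, ⟨hAdom, hApack⟩, hAcard⟩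
        · intro S h1 h2
          have hl := cycle_dom_lb hm2 h1
          by_contra hcon
          push_neg at hcon
          have : S.card * (2 * d + 1) ≤ (C0 - 1) * (2 * d + 1) :=
            Nat.mul_le_mul_right _ (by omega)
          omega
      have hNval : distPackDomNum (cycleGraph n) d p = ((t : ℕ) : ℕ∞) := by
        apply gamma_eq
        · exact ⟨B, ⟨hBdom, hBpack⟩, hBcard⟩
        · intro S h1 h2
          have hl := cycle_dom_lb hn2 h1
          by_contra hcon
          push_neg at hcon
          have : S.card * (2 * d + 1) ≤ (t - 1) * (2 * d + 1) :=
            Nat.mul_le_mul_right _ (by omega)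
          omega
      rw [hTval, hMval, hNval, ← Nat.cast_mul]
    · -- n-side infeasible
      push_neg at hFn
      obtain ⟨hqk, ht1⟩ := hFn
      have ht2 : 2 ≤ t := by omega
      have hmle : m ≤ 2 * d + 1 := by
        rcases hFm with h | h
        · exact h
        · exfalso
          have h' : C0 * (p + 1) ≤ C0 * (2 * d + 1) := by
            calc C0 * (p + 1) ≤ m := h
              _ ≤ C0 * (2 * d + 1) := by omega
          have := Nat.le_of_mul_le_mul_left h' (by omega : 0 < C0)
          omega
      have htn2 : 2 * (2 * d + 1) ≤ n := by
        have : 2 * (2 * d + 1) ≤ t * (2 * d + 1) := Nat.mul_le_mul_right _ ht2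
        omega
      have hLHS : distPackDomNum (strongProd (cycleGraph m) (cycleGraph n)) d p = ⊤ :=
        gamma_top _ _ _ (fun S h1 h2 => torus_infeasible_n hm2 hn2 hmle (by omega) htn2 h1 h2)
      have hNtop : distPackDomNum (cycleGraph n) d p = ⊤ := by
        apply gamma_top
        intro S h1 h2
        have hl := cycle_dom_lb hn2 h1
        have hS2 : 2 ≤ S.card := by
          by_contra hcon
          push_neg at hcon
          have : S.card * (2 * d + 1) ≤ 1 * (2 * d + 1) := Nat.mul_le_mul_right _ (by omega)
          omega
        have hub := cycle_pack_ub hn2 h2 hS2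
        have hqk' : S.card * (p + 1) ≤ S.card * (2 * d + 1) := by omega
        have := Nat.le_of_mul_le_mul_left hqk' (by omega : 0 < S.card)
        omega
      rw [hLHS, hNtop, ENat.mul_top (gamma_ne_zero _ _ _)]
  · -- m-side infeasible
    push_neg at hFm
    obtain ⟨hmk, hinf⟩ := hFm
    have hLHS : distPackDomNum (strongProd (cycleGraph m) (cycleGraph n)) d p = ⊤ :=
      gamma_top _ _ _ (fun S h1 h2 =>
        torus_infeasible_m hm2 hn2 hkn (by omega) (by omega) hchar1 hchar2 h1 h2)
    have hMtop : distPackDomNum (cycleGraph m) d p = ⊤ := by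
      apply gamma_top
      intro S h1 h2
      have hl := cycle_dom_lb hm2 h1
      have hc02 : 2 ≤ C0 := by
        by_contra hcon
        push_neg at hcon
        have hc01 : C0 = 1 := by omega
        rw [hc01] at hchar2
        omega
      have hSc0 : C0 ≤ S.card := by
        by_contra hcon
        push_neg at hcon
        have : S.card * (2 * d + 1) ≤ (C0 - 1) * (2 * d + 1) :=
          Nat.mul_le_mul_right _ (by omega)
        omega
      have hub := cycle_pack_ub hm2 h2 (by omega)
      have hmono : C0 * (p + 1) ≤ S.card * (p + 1) := Nat.mul_le_mul_right _ hSc0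
      omega
    rw [hLHS, hMtop, ENat.top_mul (gamma_ne_zero _ _ _)]
end
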